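/- arXiv:2104.09726 — 10 statements merged into one kernel-verified Lean document; each statement's English description precedes it below -/
import Mathlib

section
/- For all integers s ≥ 1 and n, k with 2 ≤ k ≤ n, the Stirling numbers of the second kind with level s satisfy the identity (in ℚ) S₂(n,k;s) = Σ_{j=1}^{k-1} j^{(k-1)s} (j^{(n-k+1)s} − k^{(n-k+1)s}) / ∏_{i=0, i≠j}^{k} (j^s − i^s); moreover S₂(n,1;s) = 1 for all n ≥ 1. -/
/-- Stirling numbers of the second kind with level `s`, defined by the recurrence
`S₂(n,k;s) = S₂(n-1,k-1;s) + k^s · S₂(n-1,k;s)` with `S₂(0,0;s) = 1` and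
`S₂(n,0;s) = S₂(0,n;s) = 0` for `n ≥ 1`. -/
def stirling2Lev (s : ℕ) : ℕ → ℕ → ℕ
  | 0, 0 => 1
  | 0, _ + 1 => 0
  | _ + 1, 0 => 0
  | n + 1, k + 1 => stirling2Lev s n k + (k + 1) ^ s * stirling2Lev s n (k + 1)

namespace StirAux

open Finset Polynomial

/-- The denominator product. -/
noncomputable def D (s k j : ℕ) : ℚ :=
  ∏ i ∈ (Finset.range (k + 1)).erase j, ((j : ℚ) ^ s - (i : ℚ) ^ s)

lemma cast_pow_inj {s : ℕ} (hs : 1 ≤ s) {a b : ℕ} (h : (a : ℚ) ^ s = (b : ℚ) ^ s) :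
    a = b := by
  have h' : ((a ^ s : ℕ) : ℚ) = ((b ^ s : ℕ) : ℚ) := by push_cast; exact h
  exact Nat.pow_left_injective (by omega : s ≠ 0) (Nat.cast_injective h')

lemma vInjOn {s : ℕ} (hs : 1 ≤ s) (T : Finset ℕ) :
    Set.InjOn (fun j : ℕ => (j : ℚ) ^ s) T := fun a _ b _ hab => cast_pow_inj hs hab

lemma sub_pow_ne_zero {s : ℕ} (hs : 1 ≤ s) {i j : ℕ} (hij : j ≠ i) :
    (j : ℚ) ^ s - (i : ℚ) ^ s ≠ 0 := by
  intro h
  exact hij (cast_pow_inj hs (sub_eq_zero.mp h))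

lemma D_ne_zero {s : ℕ} (hs : 1 ≤ s) (k j : ℕ) : D s k j ≠ 0 := by
  rw [D, Finset.prod_ne_zero_iff]
  intro i hi
  exact sub_pow_ne_zero hs (Finset.mem_erase.mp hi).1.symm

/-- Key Lagrange-interpolation identity: for `t < k`,
`∑_{j=0}^{k} j^{ts} / ∏_{i≠j} (j^s - i^s) = 0`. -/
lemma key {s : ℕ} (hs : 1 ≤ s) {t k : ℕ} (ht : t < k) :
    ∑ j ∈ Finset.range (k + 1), (j : ℚ) ^ (t * s) / D s k j = 0 := by
  set v : ℕ → ℚ := fun j => (j : ℚ) ^ s with hv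
  have hinj : Set.InjOn v (Finset.range (k + 1)) := vInjOn hs _
  have hcard : (Finset.range (k + 1)).card = k + 1 := Finset.card_range _
  have hdeg : ((X : ℚ[X]) ^ t).degree < (Finset.range (k + 1)).card := by
    rw [hcard, Polynomial.degree_X_pow]
    exact_mod_cast Nat.lt_succ_of_lt ht
  have hinterp := Lagrange.eq_interpolate hinj hdeg
  have hc := congrArg (fun p => Polynomial.coeff p k) hinterp
  simp only [Lagrange.interpolate_apply] at hc
  rw [Polynomial.coeff_X_pow, if_neg (by omega), Polynomial.finset_sum_coeff] at hc
  have hterm : ∀ j ∈ Finset.range (k + 1),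
      (Polynomial.C (Polynomial.eval (v j) ((X : ℚ[X]) ^ t)) *
        Lagrange.basis (Finset.range (k + 1)) v j).coeff k
      = (v j) ^ t * (D s k j)⁻¹ := by
    intro j hj
    have hnd : (Lagrange.basis (Finset.range (k + 1)) v j).natDegree = k := by
      rw [Lagrange.natDegree_basis hinj hj, hcard]
      omega
    have hlc : (Lagrange.basis (Finset.range (k + 1)) v j).leadingCoeff
        = ∏ i ∈ (Finset.range (k + 1)).erase j, (v j - v i)⁻¹ := by
      rw [Lagrange.basis, Polynomial.leadingCoeff_prod]
      refine Finset.prod_congr rfl fun i hi => ?_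
      have hji : j ≠ i := fun h => (Finset.mem_erase.mp hi).1 h.symm
      rw [Lagrange.basisDivisor, Polynomial.leadingCoeff_mul, Polynomial.leadingCoeff_C,
        (Polynomial.monic_X_sub_C (v i)).leadingCoeff, mul_one]
    have hck : (Lagrange.basis (Finset.range (k + 1)) v j).coeff k
        = (Lagrange.basis (Finset.range (k + 1)) v j).leadingCoeff := by
      rw [Polynomial.leadingCoeff, hnd]
    rw [Polynomial.coeff_C_mul, hck, hlc, Polynomial.eval_pow, Polynomial.eval_X, D,
      Finset.prod_inv_distrib]
  rw [Finset.sum_congr rfl hterm] at hc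
  have : ∑ j ∈ Finset.range (k + 1), (v j) ^ t * (D s k j)⁻¹ = 0 := hc.symm
  rw [← this]
  refine Finset.sum_congr rfl fun j hj => ?_
  rw [hv, div_eq_mul_inv, ← pow_mul, mul_comm s t]

/-- The candidate closed form. -/
noncomputable def G (s n k : ℕ) : ℚ :=
  ∑ j ∈ Finset.range (k + 1), (j : ℚ) ^ (n * s) / D s k j

lemma D_succ {s : ℕ} (k j : ℕ) (hj : j ∈ Finset.range (k + 1)) :
    D s (k + 1) j = D s k j * ((j : ℚ) ^ s - ((k + 1 : ℕ) : ℚ) ^ s) := by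
  have hjk : j ≠ k + 1 := by
    have := Finset.mem_range.mp hj; omega
  have h1 : (Finset.range (k + 2)).erase j
      = insert (k + 1) ((Finset.range (k + 1)).erase j) := by
    ext x
    simp only [Finset.mem_erase, Finset.mem_range, Finset.mem_insert]
    omega
  rw [D, h1, Finset.prod_insert (by simp), D]
  push_cast
  ring

lemma G_rec {s : ℕ} (hs : 1 ≤ s) (n k : ℕ) :
    G s (n + 1) (k + 1) = G s n k + ((k + 1 : ℕ) : ℚ) ^ s * G s n (k + 1) := by
  have hsplit : G s (n + 1) (k + 1) - ((k + 1 : ℕ) : ℚ) ^ s * G s n (k + 1) = G s n k := by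
    rw [G, G, G, Finset.mul_sum, ← Finset.sum_sub_distrib]
    rw [Finset.sum_range_succ]
    have hlast : (((k + 1 : ℕ) : ℚ) ^ ((n + 1) * s) / D s (k + 1) (k + 1)
        - ((k + 1 : ℕ) : ℚ) ^ s * (((k + 1 : ℕ) : ℚ) ^ (n * s) / D s (k + 1) (k + 1))) = 0 := by
      rw [add_mul, one_mul, pow_add, mul_comm]
      ring
    rw [hlast, add_zero]
    refine Finset.sum_congr rfl fun j hj => ?_
    rw [D_succ k j hj]
    have hd : D s k j ≠ 0 := D_ne_zero hs k j
    have hsub : (j : ℚ) ^ s - ((k + 1 : ℕ) : ℚ) ^ s ≠ 0 := by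
      refine sub_pow_ne_zero hs ?_
      have := Finset.mem_range.mp hj; omega
    have hp : (j : ℚ) ^ ((n + 1) * s) = (j : ℚ) ^ (n * s) * (j : ℚ) ^ s := by
      rw [← pow_add]; congr 1; ring
    have hstep : (j : ℚ) ^ (n * s) * (j : ℚ) ^ s / (D s k j * ((j : ℚ) ^ s - ((k + 1 : ℕ) : ℚ) ^ s))
        - ((k + 1 : ℕ) : ℚ) ^ s * ((j : ℚ) ^ (n * s) / (D s k j * ((j : ℚ) ^ s - ((k + 1 : ℕ) : ℚ) ^ s)))
        = (j : ℚ) ^ (n * s) * ((j : ℚ) ^ s - ((k + 1 : ℕ) : ℚ) ^ s)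
            / (((j : ℚ) ^ s - ((k + 1 : ℕ) : ℚ) ^ s) * D s k j) := by
      ring
    rw [hp, hstep, mul_comm ((j : ℚ) ^ (n * s)), mul_div_mul_left _ _ hsub]
  linarith [hsplit]

lemma G_zero_right {s : ℕ} (hs : 1 ≤ s) (n : ℕ) (hn : 1 ≤ n) : G s n 0 = 0 := by
  rw [G]
  rw [Finset.range_one, Finset.sum_singleton, Nat.cast_zero,
    zero_pow (Nat.mul_ne_zero (by omega) (by omega)), zero_div]

lemma G_eq {s : ℕ} (hs : 1 ≤ s) : ∀ n k : ℕ, (stirling2Lev s n k : ℚ) = G s n k := by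
  intro n
  induction n with
  | zero =>
    intro k
    cases k with
    | zero =>
      rw [stirling2Lev, G]
      simp [D]
    | succ k =>
      show ((0 : ℕ) : ℚ) = G s 0 (k + 1)
      rw [Nat.cast_zero, G]
      exact (key hs (t := 0) (k := k + 1) (Nat.succ_pos k)).symm
  | succ n ih =>
    intro k
    cases k with
    | zero =>
      rw [G_zero_right hs (n + 1) (Nat.succ_pos n)]
      norm_num [stirling2Lev]
    | succ k =>
      rw [G_rec hs n k, ← ih k, ← ih (k + 1)]
      show ((stirling2Lev s n k + (k + 1) ^ s * stirling2Lev s n (k + 1) : ℕ) : ℚ) = _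
      push_cast
      ring

lemma stirling2Lev_one {s : ℕ} : ∀ n : ℕ, 1 ≤ n → stirling2Lev s n 1 = 1 := by
  intro n
  induction n with
  | zero => omega
  | succ n ih =>
    intro _
    rw [stirling2Lev]
    cases n with
    | zero => simp [stirling2Lev]
    | succ m =>
      rw [ih (Nat.succ_pos m)]
      have h0 : stirling2Lev s (m + 1) 0 = 0 := rfl
      rw [h0]
      simp

end StirAux

theorem stmt_0 (s : ℕ) (hs : 1 ≤ s) :
    (∀ n k : ℕ, 2 ≤ k → k ≤ n →
      (stirling2Lev s n k : ℚ) =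
        ∑ j ∈ Finset.Icc 1 (k - 1),
          (j : ℚ) ^ ((k - 1) * s) * ((j : ℚ) ^ ((n - k + 1) * s) - (k : ℚ) ^ ((n - k + 1) * s)) /
            ∏ i ∈ (Finset.range (k + 1)).erase j, ((j : ℚ) ^ s - (i : ℚ) ^ s)) ∧
    (∀ n : ℕ, 1 ≤ n → stirling2Lev s n 1 = 1) := by
  constructor
  · intro n k hk hkn
    set m := n - k + 1 with hm
    -- rewrite the RHS sum over `Icc 1 (k-1)` as a sum over `range (k+1)`
    have hsubset : Finset.Icc 1 (k - 1) ⊆ Finset.range (k + 1) := by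
      intro j hj
      simp only [Finset.mem_Icc] at hj
      simp only [Finset.mem_range]
      omega
    have hext : ∑ j ∈ Finset.Icc 1 (k - 1),
          (j : ℚ) ^ ((k - 1) * s) * ((j : ℚ) ^ (m * s) - (k : ℚ) ^ (m * s)) / StirAux.D s k j
        = ∑ j ∈ Finset.range (k + 1),
          (j : ℚ) ^ ((k - 1) * s) * ((j : ℚ) ^ (m * s) - (k : ℚ) ^ (m * s)) / StirAux.D s k j := by
      refine Finset.sum_subset hsubset fun j hj hj' => ?_
      simp only [Finset.mem_range] at hj
      simp only [Finset.mem_Icc] at hj'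
      have : j = 0 ∨ j = k := by omega
      rcases this with h | h
      · subst h
        rw [Nat.cast_zero, zero_pow (Nat.mul_ne_zero (by omega) (by omega)), zero_mul, zero_div]
      · subst h
        rw [sub_self, mul_zero, zero_div]
    have hsplit : ∑ j ∈ Finset.range (k + 1),
          (j : ℚ) ^ ((k - 1) * s) * ((j : ℚ) ^ (m * s) - (k : ℚ) ^ (m * s)) / StirAux.D s k j
        = StirAux.G s n k - (k : ℚ) ^ (m * s) *
            ∑ j ∈ Finset.range (k + 1), (j : ℚ) ^ ((k - 1) * s) / StirAux.D s k j := by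
      rw [StirAux.G, Finset.mul_sum, ← Finset.sum_sub_distrib]
      refine Finset.sum_congr rfl fun j hj => ?_
      have hpow : (j : ℚ) ^ (n * s) = (j : ℚ) ^ ((k - 1) * s) * (j : ℚ) ^ (m * s) := by
        rw [← pow_add]
        congr 1
        have : (k - 1) * s + m * s = ((k - 1) + m) * s := by ring
        rw [this]
        congr 1
        omega
      rw [hpow]
      ring
    have hzero : ∑ j ∈ Finset.range (k + 1), (j : ℚ) ^ ((k - 1) * s) / StirAux.D s k j = 0 :=
      StirAux.key hs (by omega)
    rw [StirAux.G_eq hs n k]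
    calc StirAux.G s n k
        = StirAux.G s n k - (k : ℚ) ^ (m * s) * 0 := by ring
      _ = ∑ j ∈ Finset.range (k + 1),
            (j : ℚ) ^ ((k - 1) * s) * ((j : ℚ) ^ (m * s) - (k : ℚ) ^ (m * s)) / StirAux.D s k j := by
          rw [hsplit, hzero]
      _ = ∑ j ∈ Finset.Icc 1 (k - 1),
            (j : ℚ) ^ ((k - 1) * s) * ((j : ℚ) ^ (m * s) - (k : ℚ) ^ (m * s)) / StirAux.D s k j :=
          hext.symm
      _ = _ := by simp only [StirAux.D]
  · exact fun n hn => StirAux.stirling2Lev_one n hn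
end

section
/- For all integers s ≥ 1 and k ≥ 1, the partial fraction identity Σ_{j=1}^{k} 1 / ∏_{i=0, i≠j}^{k} (j^s − i^s) = (−1)^{k−1} / (k!)^s holds in ℚ (here the product over i runs from 0 to k omitting i = j, and the i = 0 factor is j^s). -/
open Polynomial Finset

lemma lag_leading {F : Type*} [Field F] (t : Finset ℕ) (v : ℕ → F)
    (hvs : Set.InjOn v t) {j : ℕ} (hj : j ∈ t) :
    (Lagrange.basis t v j).coeff (t.card - 1) = (∏ i ∈ t.erase j, (v j - v i))⁻¹ := by
  have hdeg := Lagrange.natDegree_basis hvs hj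
  rw [← hdeg, ← leadingCoeff, Lagrange.basis, leadingCoeff_prod]
  rw [← Finset.prod_inv_distrib]
  refine Finset.prod_congr rfl fun i hi => ?_
  have hne : v j ≠ v i := by
    rw [Ne, hvs.eq_iff hj (Finset.mem_of_mem_erase hi)]
    exact (Finset.mem_erase.mp hi).1.symm
  rw [Lagrange.basisDivisor, leadingCoeff_mul, leadingCoeff_C,
    (monic_X_sub_C (v i)).leadingCoeff, mul_one]

lemma sum_inv_prod_sub {F : Type*} [Field F] (t : Finset ℕ) (v : ℕ → F)
    (hvs : Set.InjOn v t) (h2 : 2 ≤ t.card) :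
    ∑ j ∈ t, (∏ i ∈ t.erase j, (v j - v i))⁻¹ = 0 := by
  have hne : t.Nonempty := Finset.card_pos.mp (by omega)
  have hsum := Lagrange.sum_basis hvs hne
  have := congrArg (fun p => Polynomial.coeff p (t.card - 1)) hsum
  rw [Polynomial.finset_sum_coeff] at this
  rw [← Finset.sum_congr rfl fun j hj => lag_leading t v hvs hj, this,
    Polynomial.coeff_one]
  simp only [ite_eq_right_iff]
  intro h
  omega

/-- For positive integers `s` and `k`, the partial fraction identity
`Σ_{j=1}^k 1 / ∏_{i=0,i≠j}^k (jˢ − iˢ) = (−1)^{k−1} / (k!)ˢ` holds in `ℚ`. -/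
theorem stmt_3 (s k : ℕ) (hs : 1 ≤ s) (hk : 1 ≤ k) :
    ∑ j ∈ Finset.Icc 1 k,
        (1 : ℚ) / ∏ i ∈ (Finset.range (k + 1)).erase j, ((j : ℚ) ^ s - (i : ℚ) ^ s)
      = (-1) ^ (k - 1) / ((Nat.factorial k : ℚ)) ^ s := by
  set v : ℕ → ℚ := fun i => (i : ℚ) ^ s with hv
  have hvinj : Function.Injective v := by
    intro a b hab
    have : ((a ^ s : ℕ) : ℚ) = ((b ^ s : ℕ) : ℚ) := by push_cast; exact hab
    exact Nat.pow_left_injective (by omega) (Nat.cast_injective this)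
  have htot := sum_inv_prod_sub (Finset.range (k + 1)) v hvinj.injOn
    (by rw [Finset.card_range]; omega)
  have h0 : (0 : ℕ) ∉ Finset.Icc 1 k := by simp
  have hsplit : Finset.range (k + 1) = insert 0 (Finset.Icc 1 k) := by
    ext x; simp only [Finset.mem_range, Finset.mem_insert, Finset.mem_Icc]; omega
  have herase0 : (Finset.range (k + 1)).erase 0 = Finset.Icc 1 k := by
    rw [hsplit]; exact Finset.erase_insert h0
  rw [hsplit, Finset.sum_insert h0, ← hsplit, herase0] at htot
  -- value of the j = 0 term
  have hv0 : v 0 = 0 := by simp [hv, zero_pow (by omega : s ≠ 0)]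
  have hfact : ∏ i ∈ Finset.Icc 1 k, v i = ((Nat.factorial k : ℚ)) ^ s := by
    simp only [hv]
    rw [Finset.prod_pow]
    congr 1
    rw [← Nat.cast_prod]
    congr 1
    rw [← Finset.Ico_add_one_right_eq_Icc]
    exact Finset.prod_Ico_id_eq_factorial k
  have hcard : (Finset.Icc 1 k).card = k := by rw [Nat.card_Icc]; omega
  have h0term : ∏ i ∈ Finset.Icc 1 k, (v 0 - v i)
      = (-1) ^ k * ((Nat.factorial k : ℚ)) ^ s := by
    have : ∀ i ∈ Finset.Icc 1 k, v 0 - v i = -1 * v i := fun i _ => by rw [hv0]; ring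
    rw [Finset.prod_congr rfl this, Finset.prod_mul_distrib, Finset.prod_const, hcard, hfact]
  have hS : ∑ j ∈ Finset.Icc 1 k, (∏ i ∈ (Finset.range (k + 1)).erase j, (v j - v i))⁻¹
      = -((-1) ^ k * ((Nat.factorial k : ℚ)) ^ s)⁻¹ := by
    rw [← h0term]; linarith [htot]
  have hfne : ((Nat.factorial k : ℚ)) ^ s ≠ 0 := by
    positivity
  calc ∑ j ∈ Finset.Icc 1 k,
        (1 : ℚ) / ∏ i ∈ (Finset.range (k + 1)).erase j, ((j : ℚ) ^ s - (i : ℚ) ^ s)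
      = ∑ j ∈ Finset.Icc 1 k,
        (∏ i ∈ (Finset.range (k + 1)).erase j, (v j - v i))⁻¹ := by
        simp [one_div, hv]
    _ = -((-1) ^ k * ((Nat.factorial k : ℚ)) ^ s)⁻¹ := hS
    _ = (-1) ^ (k - 1) / ((Nat.factorial k : ℚ)) ^ s := by
        have hpow : ((-1 : ℚ)) ^ k = (-1) ^ (k - 1) * (-1) := by
          rw [← pow_succ]; congr 1; omega
        rw [hpow]
        rcases neg_one_pow_eq_or ℚ (k - 1) with h | h <;>
          rw [h] <;> field_simp
end

section
/- For every integer n ≥ 0 and every integer k, the poly-Bernoulli number with level 2 satisfies 𝔅_{2n}^{(k)} = Σ_{m=0}^{n} (1/(2m+1)^k) Σ_{i_1+⋯+i_{2m} = n−m, i_1,…,i_{2m} ≥ 0} (−1/4)^{n−m} · (2n)! / ((2i_1+1)! ⋯ (2i_{2m}+1)!), where for m = 0 the inner sum (over 0-tuples) equals 1 if n = 0 and 0 otherwise. -/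
/-- Poly-Bernoulli numbers with level `2`. -/
def polyBernoulliLev2 (n : ℕ) (k : ℤ) : ℚ :=
  ∑ m ∈ Finset.range (n + 1),
    (stirling2Lev 2 n m : ℚ) * (-1) ^ (n - m) * (Nat.factorial (2 * m) : ℚ)
      / ((2 * m + 1 : ℚ)) ^ k

/-!
The level-2 Stirling numbers are the Taylor coefficients of the even powers of `sinh`:
`4 ^ m (2n)! [x^{2n}] sinh^{2m} = 4 ^ n S₂(n,m;2) (2m)!`. Indeed `cosh² = 1 + sinh²` gives
`(sinh^{j+2})'' = (j+2)(j+1) sinh^j + (j+2)² sinh^{j+2}`, which on coefficients is exactly the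
recurrence defining `S₂(·,·;2)`. Expanding `sinh^{2m}` as a product of `2m` copies of
`∑ x^{2i+1}/(2i+1)!` turns that coefficient into the multinomial sum.
-/

open PowerSeries Finset
open scoped Nat

theorem PowerSeries.coeff_prod_fin {R : Type*} [CommSemiring R] {k : ℕ} (f : Fin k → R⟦X⟧)
    (N : ℕ) :
    coeff N (∏ t, f t) = ∑ x ∈ Nat.antidiagonalTuple k N, ∏ t, coeff (x t) (f t) := by
  rw [coeff_prod]
  exact Finset.sum_equiv Finsupp.equivFunOnFinite (by simp [Nat.mem_antidiagonalTuple])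
    (fun _ _ => rfl)

noncomputable def sinhSeries : ℚ⟦X⟧ := mk fun n => if Odd n then (n ! : ℚ)⁻¹ else 0

noncomputable def coshSeries : ℚ⟦X⟧ := mk fun n => if Even n then (n ! : ℚ)⁻¹ else 0

theorem derivative_sinhSeries : d⁄dX ℚ sinhSeries = coshSeries := by
  ext n
  simp only [coeff_derivative, sinhSeries, coshSeries, coeff_mk, Nat.odd_add_one,
    Nat.not_odd_iff_even]
  split_ifs
  · rw [Nat.factorial_succ]; push_cast; field_simp
  · simp

theorem derivative_coshSeries : d⁄dX ℚ coshSeries = sinhSeries := by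
  ext n
  simp only [coeff_derivative, sinhSeries, coshSeries, coeff_mk, Nat.even_add_one,
    Nat.not_even_iff_odd]
  split_ifs
  · rw [Nat.factorial_succ]; push_cast; field_simp
  · simp

theorem constantCoeff_sinhSeries : constantCoeff sinhSeries = 0 := by
  simp [sinhSeries, ← coeff_zero_eq_constantCoeff_apply]

theorem constantCoeff_coshSeries : constantCoeff coshSeries = 1 := by
  simp [coshSeries, ← coeff_zero_eq_constantCoeff_apply]

theorem coshSeries_sq : coshSeries ^ 2 = 1 + sinhSeries ^ 2 := by
  refine derivative.ext ?_ (by simp [constantCoeff_sinhSeries, constantCoeff_coshSeries])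
  simp only [derivative_pow, map_add, derivative_one, derivative_sinhSeries,
    derivative_coshSeries]
  ring

theorem derivative_derivative_sinhSeries_pow (j : ℕ) :
    d⁄dX ℚ (d⁄dX ℚ (sinhSeries ^ (j + 2))) =
      ((j + 2) * (j + 1) : ℚ) • sinhSeries ^ j +
        ((j + 2) ^ 2 : ℚ) • sinhSeries ^ (j + 2) := by
  simp only [derivative_pow, Derivation.leibniz, derivative_sinhSeries, derivative_coshSeries,
    Derivation.map_natCast, smul_eq_mul, Nat.add_sub_cancel, show j + 2 - 1 = j + 1 by omega,
    smul_eq_C_mul, map_add, map_mul, map_natCast, map_ofNat, map_pow, map_one]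
  push_cast
  linear_combination ((j + 2) * (j + 1) * sinhSeries ^ j : ℚ⟦X⟧) * coshSeries_sq

theorem coeff_sinhSeries_pow_add_two (N j : ℕ) :
    (N + 2) * (N + 1) * coeff (N + 2) (sinhSeries ^ (j + 2)) =
      (j + 2) * (j + 1) * coeff N (sinhSeries ^ j) +
        (j + 2) ^ 2 * coeff N (sinhSeries ^ (j + 2)) := by
  have h := congrArg (coeff N) (derivative_derivative_sinhSeries_pow j)
  simp only [coeff_derivative, map_add, coeff_smul, smul_eq_mul] at h
  push_cast at h
  linear_combination h

theorem cast_factorial_two_mul_add_two (a : ℕ) :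
    ((2 * a + 2)! : ℚ) = (2 * a + 2) * (2 * a + 1) * (2 * a)! := by
  push_cast [Nat.factorial_succ]
  ring

theorem four_pow_mul_factorial_mul_coeff_sinhSeries_pow (n m : ℕ) :
    4 ^ m * (2 * n)! * coeff (2 * n) (sinhSeries ^ (2 * m)) =
      4 ^ n * stirling2Lev 2 n m * (2 * m)! := by
  induction n generalizing m with
  | zero =>
    cases m with
    | zero => simp [stirling2Lev]
    | succ m => simp [stirling2Lev, constantCoeff_sinhSeries]
  | succ n ih =>
    cases m with
    | zero => simp [stirling2Lev, coeff_one]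
    | succ m =>
      have step := coeff_sinhSeries_pow_add_two (2 * n) (2 * m)
      have ih₀ := ih m
      have ih₁ := ih (m + 1)
      rw [show 2 * (m + 1) = 2 * m + 2 by ring, cast_factorial_two_mul_add_two] at ih₁ ⊢
      rw [show 2 * (n + 1) = 2 * n + 2 by ring, cast_factorial_two_mul_add_two]
      simp only [stirling2Lev]
      push_cast at step ⊢
      linear_combination (4 ^ (m + 1) * (2 * n)! : ℚ) * step +
        (4 * (2 * m + 2) * (2 * m + 1) : ℚ) * ih₀ + ((2 * m + 2) ^ 2 : ℚ) * ih₁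

theorem coeff_sinhSeries_pow (k M : ℕ) :
    coeff (2 * M + k) (sinhSeries ^ k) =
      ∑ x ∈ Nat.antidiagonalTuple k M, (∏ t, ((2 * x t + 1)! : ℚ))⁻¹ := by
  rw [← Fin.prod_const, coeff_prod_fin]
  symm
  refine sum_bij_ne_zero (fun x _ _ t => 2 * x t + 1) ?_ ?_ ?_ ?_
  · intro x hx _
    simp_all [Nat.mem_antidiagonalTuple, sum_add_distrib, ← mul_sum]
  · intro x _ _ x' _ _ h
    funext t
    have := congrFun h t
    omega
  · intro y hy hy0
    have hodd : ∀ t, Odd (y t) := fun t => by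
      by_contra h
      exact hy0 (prod_eq_zero (mem_univ t) (by simp [sinhSeries, h]))
    have hy' : ∀ t, 2 * (y t / 2) + 1 = y t := fun t =>
      Nat.two_mul_div_two_add_one_of_odd (hodd t)
    refine ⟨fun t => y t / 2, ?_, by positivity, funext hy'⟩
    rw [Nat.mem_antidiagonalTuple] at hy ⊢
    rw [← sum_congr rfl fun t _ => hy' t] at hy
    simp only [sum_add_distrib, ← mul_sum, sum_const, card_univ, Fintype.card_fin,
      smul_eq_mul] at hy
    omega
  · intro x _ _
    simp [sinhSeries, prod_inv_distrib]

theorem factorial_mul_sum_antidiagonalTuple (m d : ℕ) :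
    ((2 * (m + d))! : ℚ) *
        ∑ x ∈ Nat.antidiagonalTuple (2 * m) d, (∏ t, ((2 * x t + 1)! : ℚ))⁻¹ =
      4 ^ d * stirling2Lev 2 (m + d) m * (2 * m)! := by
  have h := four_pow_mul_factorial_mul_coeff_sinhSeries_pow (m + d) m
  rw [show 2 * (m + d) = 2 * d + 2 * m by ring, coeff_sinhSeries_pow, pow_add] at h
  rw [show 2 * (m + d) = 2 * d + 2 * m by ring]
  exact mul_left_cancel₀ (pow_ne_zero m four_ne_zero) (by linear_combination h)

/-- Explicit multinomial formula:
`𝔅_{2n}^{(k)} = Σ_{m=0}^n (2m+1)^{-k} Σ_{i₁+⋯+i_{2m}=n−m} (−1/4)^{n−m} (2n)!/((2i₁+1)!⋯(2i_{2m}+1)!)`,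
the inner sum being over tuples of `2m` nonnegative integers summing to `n−m`. -/
theorem stmt_7 (n : ℕ) (k : ℤ) :
    polyBernoulliLev2 n k =
      ∑ m ∈ Finset.range (n + 1), (1 / ((2 * m + 1 : ℚ)) ^ k) *
        ∑ i ∈ Finset.Nat.antidiagonalTuple (2 * m) (n - m),
          (-(1 / 4) : ℚ) ^ (n - m) * (Nat.factorial (2 * n) : ℚ)
            / ∏ t : Fin (2 * m), (Nat.factorial (2 * i t + 1) : ℚ) := by
  rw [polyBernoulliLev2]
  refine sum_congr rfl fun m hm => ?_
  obtain ⟨d, rfl⟩ := Nat.exists_eq_add_of_le (Nat.lt_succ_iff.mp (mem_range.mp hm))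
  have hsign : (-(1 / 4) : ℚ) ^ d * 4 ^ d = (-1) ^ d := by
    rw [← mul_pow]; norm_num
  simp only [Nat.add_sub_cancel_left, div_eq_mul_inv, ← mul_sum]
  linear_combination -((2 * m + 1 : ℚ) ^ k)⁻¹ *
    ((-(1 / 4) : ℚ) ^ d * factorial_mul_sum_antidiagonalTuple m d +
      stirling2Lev 2 (m + d) m * (2 * m)! * hsign)
end

section
/- For all integers n ≥ 0 and k ≥ 1, the poly-Bernoulli numbers with level 2 satisfy the recurrence 𝔅_{2n}^{(k−1)} = 𝔅_{2n}^{(k)} + (2n)! · Σ_{m=0}^{n−1} 4((−1)^{n−m} − (−4)^{n−m}) B_{2n−2m} 𝔅_{2m+2}^{(k)} / ((2n−2m)! (2m+1)!), where B_j denotes the classical Bernoulli numbers. -/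
open PowerSeries Finset Nat

theorem stirling2Lev_eq_zero_of_lt (s : ℕ) : ∀ {n j : ℕ}, n < j → stirling2Lev s n j = 0
  | 0, _ + 1, _ => rfl
  | n + 1, j + 1, h => by
    rw [stirling2Lev, stirling2Lev_eq_zero_of_lt s (by omega : n < j),
      stirling2Lev_eq_zero_of_lt s (by omega : n < j + 1), mul_zero, add_zero]

theorem sum_range_two_mul_add_two {M : Type*} [AddCommMonoid M] (f : ℕ → M) (n : ℕ) :
    ∑ i ∈ range (2 * n + 2), f i = ∑ m ∈ range (n + 1), (f (2 * m) + f (2 * m + 1)) := by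
  induction n with
  | zero => simp [sum_range_succ]
  | succ n ih =>
    rw [show 2 * (n + 1) + 2 = 2 * n + 2 + 1 + 1 by omega, sum_range_succ, sum_range_succ, ih,
      sum_range_succ _ (n + 1), add_assoc]
    rfl

theorem neg_one_pow_sub_eq_pow_add {R : Type*} [Monoid R] [HasDistribNeg R] {m n : ℕ}
    (h : m ≤ n) : (-1 : R) ^ (n - m) = (-1) ^ (n + m) := by
  rw [show n + m = n - m + 2 * m by omega, pow_add, pow_mul, neg_one_sq, one_pow, mul_one]

namespace PowerSeries

theorem derivative_rescale {R : Type*} [CommSemiring R] (a : R) (f : R⟦X⟧) :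
    d⁄dX R (rescale a f) = C a * rescale a (d⁄dX R f) := by
  ext n
  simp only [coeff_derivative, coeff_rescale, coeff_C_mul]
  ring

theorem coeff_two_mul_add_one_mul {R : Type*} [CommSemiring R] (f g : R⟦X⟧)
    (hg : ∀ m, coeff (2 * m) g = 0) (n : ℕ) :
    coeff (2 * n + 1) (f * g) =
      ∑ m ∈ range (n + 1), coeff (2 * (n - m)) f * coeff (2 * m + 1) g := by
  rw [mul_comm f g, coeff_mul,
    Nat.sum_antidiagonal_eq_sum_range_succ (fun a b => coeff a g * coeff b f),
    sum_range_two_mul_add_two]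
  refine sum_congr rfl fun m _ => ?_
  rw [hg, zero_mul, zero_add, mul_comm, show 2 * n + 1 - (2 * m + 1) = 2 * (n - m) by omega]

theorem eq_zero_of_derivative_derivative_eq_C_mul {K : Type*} [Field K] [CharZero K] {c : K}
    {h : K⟦X⟧} (hode : d⁄dX K (d⁄dX K h) = C c * h) (h0 : coeff 0 h = 0)
    (h1 : coeff 1 h = 0) : h = 0 := by
  ext N
  induction N using Nat.strong_induction_on with
  | _ N ih =>
    match N with
    | 0 => exact h0
    | 1 => exact h1
    | N + 2 =>
      have hN := congrArg (coeff N) hode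
      rw [coeff_derivative, coeff_derivative, coeff_C_mul, ih N (by omega), map_zero,
        mul_zero] at hN
      have hN2 : (N + 1 + 1 : K) ≠ 0 := by exact_mod_cast (N + 1).succ_ne_zero
      push_cast at hN
      simpa [hN2, Nat.cast_add_one_ne_zero] using hN

end PowerSeries

noncomputable def twoSinhHalf : ℚ⟦X⟧ := rescale (1 / 2) (exp ℚ) - rescale (-(1 / 2)) (exp ℚ)

noncomputable def twoCoshHalf : ℚ⟦X⟧ := rescale (1 / 2) (exp ℚ) + rescale (-(1 / 2)) (exp ℚ)

local notation "σ" => twoSinhHalf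
local notation "γ" => twoCoshHalf

theorem rescale_exp_half_mul_rescale_exp_neg_half :
    rescale (1 / 2 : ℚ) (exp ℚ) * rescale (-(1 / 2)) (exp ℚ) = 1 := by
  rw [exp_mul_exp_eq_exp_add]
  norm_num

theorem two_mul_C_half : (2 : ℚ⟦X⟧) * C (1 / 2) = 1 := by
  rw [← map_ofNat C 2, ← map_mul]
  norm_num

theorem two_mul_derivative_twoSinhHalf : 2 * d⁄dX ℚ σ = γ := by
  simp only [twoSinhHalf, twoCoshHalf, map_sub, derivative_rescale, derivative_exp, map_neg]
  linear_combination (rescale (1 / 2 : ℚ) (exp ℚ) + rescale (-(1 / 2)) (exp ℚ)) * two_mul_C_half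

theorem two_mul_derivative_twoCoshHalf : 2 * d⁄dX ℚ γ = σ := by
  simp only [twoSinhHalf, twoCoshHalf, map_add, derivative_rescale, derivative_exp, map_neg]
  linear_combination (rescale (1 / 2 : ℚ) (exp ℚ) - rescale (-(1 / 2)) (exp ℚ)) * two_mul_C_half

theorem twoCoshHalf_sq : γ ^ 2 = σ ^ 2 + 4 := by
  rw [twoSinhHalf, twoCoshHalf]
  linear_combination 4 * rescale_exp_half_mul_rescale_exp_neg_half

theorem constantCoeff_twoSinhHalf : constantCoeff σ = 0 := by
  rw [← coeff_zero_eq_constantCoeff_apply, twoSinhHalf, map_sub, coeff_rescale, coeff_rescale]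
  simp

theorem derivative_derivative_twoSinhHalf_pow (j : ℕ) :
    d⁄dX ℚ (d⁄dX ℚ (σ ^ (2 * j + 2))) =
      C ((2 * j + 2) * (2 * j + 1) : ℚ) * σ ^ (2 * j) + C ((j + 1) ^ 2 : ℚ) * σ ^ (2 * j + 2) := by
  have hσ' : 2 * d⁄dX ℚ (d⁄dX ℚ σ) = d⁄dX ℚ γ := by
    rw [← two_mul_derivative_twoSinhHalf, two_mul, two_mul, map_add]
  have h4 : (4 : ℚ⟦X⟧) ≠ 0 := by
    rw [← map_ofNat (C (R := ℚ)) 4]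
    exact (map_ne_zero C).2 four_ne_zero
  refine mul_left_cancel₀ h4 ?_
  simp only [derivative_pow, Derivation.leibniz, Derivation.map_natCast, smul_eq_mul, map_mul,
    map_add, map_natCast, map_ofNat, map_one, map_pow]
  push_cast
  linear_combination (2 * (j : ℚ⟦X⟧) + 2) * (2 * j + 1) * σ ^ (2 * j) *
      ((2 * d⁄dX ℚ σ + γ) * two_mul_derivative_twoSinhHalf + twoCoshHalf_sq) +
    (2 * (j : ℚ⟦X⟧) + 2) * σ ^ (2 * j + 1) * (2 * hσ' + two_mul_derivative_twoCoshHalf)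

noncomputable def stirling2Lev2Series (j : ℕ) : ℚ⟦X⟧ :=
  mk fun N => if Even N then ((2 * j)! * stirling2Lev 2 (N / 2) j : ℚ) / N ! else 0

theorem coeff_stirling2Lev2Series_two_mul (n j : ℕ) :
    coeff (2 * n) (stirling2Lev2Series j) = (2 * j)! * stirling2Lev 2 n j / (2 * n)! := by
  simp [stirling2Lev2Series]

theorem coeff_stirling2Lev2Series_two_mul_add_one (n j : ℕ) :
    coeff (2 * n + 1) (stirling2Lev2Series j) = 0 := by
  simp [stirling2Lev2Series]

theorem derivative_derivative_stirling2Lev2Series (j : ℕ) :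
    d⁄dX ℚ (d⁄dX ℚ (stirling2Lev2Series (j + 1))) =
      C ((2 * j + 2) * (2 * j + 1) : ℚ) * stirling2Lev2Series j +
        C ((j + 1) ^ 2 : ℚ) * stirling2Lev2Series (j + 1) := by
  ext N
  simp only [coeff_derivative, map_add, coeff_C_mul]
  obtain ⟨n, rfl | rfl⟩ := Nat.even_or_odd' N
  · rw [show 2 * n + 1 + 1 = 2 * (n + 1) by ring, coeff_stirling2Lev2Series_two_mul,
      coeff_stirling2Lev2Series_two_mul, coeff_stirling2Lev2Series_two_mul, stirling2Lev,
      show 2 * (n + 1) = 2 * n + 1 + 1 by ring, show 2 * (j + 1) = 2 * j + 1 + 1 by ring]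
    simp only [Nat.factorial_succ]
    push_cast
    field_simp
    ring
  · rw [show 2 * n + 1 + 1 + 1 = 2 * (n + 1) + 1 by ring,
      coeff_stirling2Lev2Series_two_mul_add_one, coeff_stirling2Lev2Series_two_mul_add_one,
      coeff_stirling2Lev2Series_two_mul_add_one]
    ring

theorem stirling2Lev2Series_eq_twoSinhHalf_pow (j : ℕ) : stirling2Lev2Series j = σ ^ (2 * j) := by
  induction j with
  | zero =>
    ext N
    obtain ⟨n, rfl | rfl⟩ := Nat.even_or_odd' N
    · rw [coeff_stirling2Lev2Series_two_mul]
      rcases n with _ | n <;> simp [stirling2Lev, coeff_one]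
    · simp [coeff_stirling2Lev2Series_two_mul_add_one, coeff_one]
  | succ j ih =>
    have hX : X ^ (2 * (j + 1)) ∣ σ ^ (2 * (j + 1)) :=
      pow_dvd_pow_of_dvd (X_dvd_iff.2 constantCoeff_twoSinhHalf) _
    rw [← sub_eq_zero]
    refine eq_zero_of_derivative_derivative_eq_C_mul (c := ((j + 1) ^ 2 : ℚ)) ?_ ?_ ?_
    · rw [map_sub, map_sub, derivative_derivative_stirling2Lev2Series, Nat.mul_add_one 2 j,
        derivative_derivative_twoSinhHalf_pow, ih]
      ring
    · rw [map_sub, X_pow_dvd_iff.1 hX 0 (by omega), sub_zero]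
      simpa [stirling2Lev] using coeff_stirling2Lev2Series_two_mul 0 (j + 1)
    · rw [map_sub, X_pow_dvd_iff.1 hX 1 (by omega), sub_zero]
      exact coeff_stirling2Lev2Series_two_mul_add_one 0 (j + 1)

noncomputable def xTanhHalf : ℚ⟦X⟧ :=
  X - 2 * (bernoulliPowerSeries ℚ - rescale 2 (bernoulliPowerSeries ℚ))

theorem coeff_two_mul_xTanhHalf (d : ℕ) :
    coeff (2 * d) xTanhHalf = 2 * (4 ^ d - 1) * bernoulli (2 * d) / (2 * d)! := by
  rw [xTanhHalf, ← map_ofNat (C (R := ℚ)) 2, map_sub, coeff_C_mul, map_sub, coeff_rescale,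
    coeff_X, if_neg (by omega), pow_mul]
  simp only [bernoulliPowerSeries, coeff_mk, Algebra.algebraMap_self, RingHom.id_apply]
  ring

theorem xTanhHalf_mul_twoCoshHalf : xTanhHalf * γ = X * σ := by
  set u := rescale (1 / 2 : ℚ) (exp ℚ)
  set v := rescale (-(1 / 2) : ℚ) (exp ℚ)
  have huv : u * v = 1 := rescale_exp_half_mul_rescale_exp_neg_half
  have hexp : exp ℚ = u * u := by
    rw [exp_mul_exp_eq_exp_add]
    norm_num
  have hexp2 : rescale 2 (exp ℚ) = u * u * (u * u) := by
    rw [exp_mul_exp_eq_exp_add, exp_mul_exp_eq_exp_add]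
    norm_num
  have hB : bernoulliPowerSeries ℚ * (u * u - 1) = X := by
    rw [← hexp]
    exact bernoulliPowerSeries_mul_exp_sub_one ℚ
  have hB2 : rescale 2 (bernoulliPowerSeries ℚ) * (u * u * (u * u) - 1) = 2 * X := by
    have := congrArg (rescale (2 : ℚ)) (bernoulliPowerSeries_mul_exp_sub_one ℚ)
    rwa [map_mul, map_sub, map_one, rescale_X, map_ofNat, hexp2] at this
  have hne : u * (u * u * (u * u) - 1) ≠ 0 := by
    refine mul_ne_zero (left_ne_zero_of_mul_eq_one huv) fun h => ?_
    have := congrArg (coeff 1) h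
    rw [← hexp2] at this
    simp [coeff_rescale] at this
  -- clear the denominators e^x - 1 of B(x) and e^{2x} - 1 of B(2x)
  refine mul_right_cancel₀ hne ?_
  rw [xTanhHalf, twoCoshHalf, twoSinhHalf]
  linear_combination (-2 * (u + v) * u * (u * u + 1)) * hB + (2 * (u + v) * u) * hB2 +
    X * (2 * u ^ 4 - 2 * u ^ 2) * huv

theorem xTanhHalf_mul_derivative_twoSinhHalf_pow (j : ℕ) :
    xTanhHalf * d⁄dX ℚ (σ ^ (2 * j)) = C (j : ℚ) * (X * σ ^ (2 * j)) := by
  rcases j with _ | j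
  · simp
  · rw [derivative_pow, map_natCast, show 2 * (j + 1) - 1 = 2 * j + 1 by omega]
    push_cast
    linear_combination ((j : ℚ⟦X⟧) + 1) * σ ^ (2 * j + 1) *
      (xTanhHalf * two_mul_derivative_twoSinhHalf + xTanhHalf_mul_twoCoshHalf)

theorem coeff_two_mul_add_one_derivative_stirling2Lev2Series (m j : ℕ) :
    coeff (2 * m + 1) (d⁄dX ℚ (stirling2Lev2Series j)) =
      (2 * j)! * stirling2Lev 2 (m + 1) j / (2 * m + 1)! := by
  rw [coeff_derivative, show 2 * m + 1 + 1 = 2 * (m + 1) by ring,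
    coeff_stirling2Lev2Series_two_mul, show 2 * (m + 1) = 2 * m + 1 + 1 by ring,
    Nat.factorial_succ]
  push_cast
  field_simp

theorem sum_coeff_xTanhHalf_mul_stirling2Lev (n j : ℕ) :
    ∑ m ∈ range n, coeff (2 * (n - m)) xTanhHalf * stirling2Lev 2 (m + 1) j / (2 * m + 1)! =
      j * stirling2Lev 2 n j / (2 * n)! := by
  have h := congrArg (coeff (2 * n + 1)) (xTanhHalf_mul_derivative_twoSinhHalf_pow j)
  rw [← stirling2Lev2Series_eq_twoSinhHalf_pow, coeff_two_mul_add_one_mul _ _ (fun m => by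
      rw [coeff_derivative, coeff_stirling2Lev2Series_two_mul_add_one, zero_mul]),
    sum_range_succ, Nat.sub_self, coeff_two_mul_xTanhHalf, coeff_C_mul, coeff_succ_X_mul,
    coeff_stirling2Lev2Series_two_mul] at h
  simp only [coeff_two_mul_add_one_derivative_stirling2Lev2Series] at h
  have hj : ((2 * j)! : ℚ) ≠ 0 := by positivity
  rw [← mul_right_inj' hj, mul_sum]
  simp only [pow_zero, sub_self, mul_zero, zero_mul, zero_div, add_zero] at h
  convert h using 1
  · exact sum_congr rfl fun m _ => by ring
  · ring

theorem polyBernoulliLev2_eq_sum {n N : ℕ} (hN : n < N) (k : ℤ) :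
    polyBernoulliLev2 n k =
      ∑ j ∈ range N, (-1) ^ (n + j) * stirling2Lev 2 n j * (2 * j)! / (2 * j + 1 : ℚ) ^ k := by
  rw [polyBernoulliLev2, ← sum_subset (range_subset_range.2 hN) fun j _ hj => by
    rw [stirling2Lev_eq_zero_of_lt 2 (by simpa using hj)]; simp]
  refine sum_congr rfl fun j hj => ?_
  rw [neg_one_pow_sub_eq_pow_add (by simpa [Nat.lt_succ_iff] using hj)]
  ring

theorem polyBernoulliLev2_sub_one_sub_self (n : ℕ) (k : ℤ) :
    polyBernoulliLev2 n (k - 1) - polyBernoulliLev2 n k =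
      ∑ j ∈ range (n + 1),
        (-1) ^ (n + j) * stirling2Lev 2 n j * (2 * j)! * (2 * j) / (2 * j + 1 : ℚ) ^ k := by
  rw [polyBernoulliLev2_eq_sum (lt_add_one n), polyBernoulliLev2_eq_sum (lt_add_one n),
    ← sum_sub_distrib]
  refine sum_congr rfl fun j _ => ?_
  have hj : (2 * j + 1 : ℚ) ≠ 0 := by positivity
  rw [zpow_sub_one₀ hj]
  field_simp
  ring

theorem bernoulli_mul_polyBernoulliLev2_succ_div_eq_sum {m n : ℕ} (hm : m < n) (k : ℤ) :
    4 * ((-1 : ℚ) ^ (n - m) - (-4 : ℚ) ^ (n - m)) * bernoulli (2 * n - 2 * m) *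
        polyBernoulliLev2 (m + 1) k / ((2 * n - 2 * m)! * (2 * m + 1)!) =
      ∑ j ∈ range (n + 1), 2 * (-1) ^ (n + j) * (2 * j)! / (2 * j + 1 : ℚ) ^ k *
        (coeff (2 * (n - m)) xTanhHalf * stirling2Lev 2 (m + 1) j / (2 * m + 1)!) := by
  obtain ⟨d, rfl⟩ := Nat.exists_eq_add_of_lt hm
  rw [polyBernoulliLev2_eq_sum (by omega : m + 1 < m + d + 1 + 1), mul_sum, sum_div,
    show m + d + 1 - m = d + 1 by omega, show 2 * (m + d + 1) - 2 * m = 2 * (d + 1) by omega,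
    coeff_two_mul_xTanhHalf, show (-4 : ℚ) = -1 * 4 by norm_num, mul_pow]
  refine sum_congr rfl fun j _ => ?_
  ring

theorem stmt_8_general (n : ℕ) (k : ℤ) :
    polyBernoulliLev2 n (k - 1) =
      polyBernoulliLev2 n k + (Nat.factorial (2 * n) : ℚ) *
        ∑ m ∈ Finset.range n,
          4 * ((-1 : ℚ) ^ (n - m) - (-4 : ℚ) ^ (n - m)) * bernoulli (2 * n - 2 * m)
              * polyBernoulliLev2 (m + 1) k
            / ((Nat.factorial (2 * n - 2 * m) : ℚ) * (Nat.factorial (2 * m + 1) : ℚ)) := by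
  rw [← sub_eq_iff_eq_add', polyBernoulliLev2_sub_one_sub_self,
    sum_congr rfl fun m hm => bernoulli_mul_polyBernoulliLev2_succ_div_eq_sum (mem_range.1 hm) k,
    sum_comm, mul_sum]
  refine sum_congr rfl fun j _ => ?_
  rw [← mul_sum, sum_coeff_xTanhHalf_mul_stirling2Lev]
  field_simp

/-- Recurrence relating `𝔅_{2n}^{(k−1)}` to `𝔅_{2n}^{(k)}` via the classical
Bernoulli numbers `B_j` (defined by `x/(eˣ−1) = Σ B_j x^j/j!`):
`𝔅_{2n}^{(k−1)} = 𝔅_{2n}^{(k)} + (2n)! Σ_{m=0}^{n−1}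
  4((−1)^{n−m} − (−4)^{n−m}) B_{2n−2m} 𝔅_{2m+2}^{(k)} / ((2n−2m)!(2m+1)!)`. -/
theorem stmt_8 (n : ℕ) (k : ℤ) (hk : 1 ≤ k) :
    polyBernoulliLev2 n (k - 1) =
      polyBernoulliLev2 n k + (Nat.factorial (2 * n) : ℚ) *
        ∑ m ∈ Finset.range n,
          4 * ((-1 : ℚ) ^ (n - m) - (-4 : ℚ) ^ (n - m)) * bernoulli (2 * n - 2 * m)
              * polyBernoulliLev2 (m + 1) k
            / ((Nat.factorial (2 * n - 2 * m) : ℚ) * (Nat.factorial (2 * m + 1) : ℚ)) :=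
  stmt_8_general n k
end

section
/- For every integer n ≥ 1 and every integer k, the poly-Cauchy numbers with level 2 are expressed in terms of the poly-Bernoulli numbers with level 2 by 𝔠_{2n}^{(k)} = Σ_{m=1}^{n} Σ_{l=1}^{m} ((−4)^{n−m} / (2m)!) · S₁(n,m;2) · S₁(m,l;2) · 𝔅_{2l}^{(k)}. -/
/-- Stirling numbers of the first kind with level `2`:
`S₁(n,k;2) = S₁(n-1,k-1;2) + (n-1)² S₁(n-1,k;2)`. -/
def stirling1Lev2 : ℕ → ℕ → ℕ
  | 0, 0 => 1
  | 0, _ + 1 => 0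
  | _ + 1, 0 => 0
  | n + 1, k + 1 => stirling1Lev2 n k + n ^ 2 * stirling1Lev2 n (k + 1)

/-- Poly-Cauchy numbers with level `2`:
`𝔠_{2n}^{(k)} = Σ_{m=0}^n S₁(n,m;2) (−4)^{n−m}/(2m+1)^k`. -/
def polyCauchyLev2 (n : ℕ) (k : ℤ) : ℚ :=
  ∑ m ∈ Finset.range (n + 1),
    (stirling1Lev2 n m : ℚ) * (-4) ^ (n - m) / ((2 * m + 1 : ℚ)) ^ k

/-- signed Stirling1 level 2 -/
def auxS1 : ℕ → ℕ → ℤ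
  | 0, 0 => 1
  | 0, _ + 1 => 0
  | _ + 1, 0 => 0
  | n + 1, k + 1 => auxS1 n k - (n : ℤ) ^ 2 * auxS1 n (k + 1)

lemma stirling1_zero : ∀ m l, m < l → stirling1Lev2 m l = 0 := by
  intro m
  induction m with
  | zero => intro l hl; cases l with | zero => omega | succ l => rfl
  | succ m ih =>
    intro l hl
    cases l with
    | zero => omega
    | succ l =>
      simp only [stirling1Lev2, ih l (by omega), ih (l+1) (by omega)]
      ring

lemma stirling2_zero : ∀ l j, l < j → stirling2Lev 2 l j = 0 := by
  intro l
  induction l with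
  | zero => intro j hj; cases j with | zero => omega | succ j => rfl
  | succ l ih =>
    intro j hj
    cases j with
    | zero => omega
    | succ j =>
      simp only [stirling2Lev, ih j (by omega), ih (j+1) (by omega)]
      ring

lemma auxS1_zero : ∀ m l, m < l → auxS1 m l = 0 := by
  intro m
  induction m with
  | zero => intro l hl; cases l with | zero => omega | succ l => rfl
  | succ m ih =>
    intro l hl
    cases l with
    | zero => omega
    | succ l =>
      simp only [auxS1, ih l (by omega), ih (l+1) (by omega)]
      ring

lemma auxS1_eq : ∀ m l, auxS1 m l = (-1) ^ (m - l) * (stirling1Lev2 m l : ℤ) := by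
  intro m
  induction m with
  | zero =>
    intro l
    cases l with
    | zero => rfl
    | succ l => simp [auxS1, stirling1Lev2]
  | succ m ih =>
    intro l
    cases l with
    | zero => simp [auxS1, stirling1Lev2]
    | succ l =>
      simp only [auxS1, stirling1Lev2, ih]
      rcases le_or_gt (l + 1) m with h | h
      · have h1 : m - l = (m - (l+1)) + 1 := by omega
        have h2 : m + 1 - (l + 1) = (m - (l+1)) + 1 := by omega
        rw [h1, h2, pow_succ]
        push_cast
        ring
      · have h1 : m - l = 0 ∨ (m - l = 1 ∧ l + 1 = m + 1) := by omega
        have h3 : stirling1Lev2 m (l+1) = 0 := stirling1_zero _ _ (by omega)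
        rcases h1 with h1 | ⟨h1, h2⟩
        · have h2 : m + 1 - (l+1) = 0 := by omega
          have h4 : m - (l+1) = 0 := by omega
          rw [h1, h2, h3, h4]
          push_cast; ring
        · have h4 : m - (l+1) = 0 := by omega
          have h5 : m + 1 - (l+1) = m - l := by omega
          rw [h5, h3, h4]
          push_cast; ring

lemma orth (m : ℕ) : ∀ j : ℕ,
    ∑ l ∈ Finset.range (m+1), auxS1 m l * (stirling2Lev 2 l j : ℤ)
      = if m = j then 1 else 0 := by
  induction m with
  | zero =>
    intro j
    cases j with
    | zero => simp [auxS1, stirling2Lev]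
    | succ j => simp [auxS1, stirling2Lev]
  | succ m ih =>
    intro j
    rw [Finset.sum_range_succ']
    have h0 : auxS1 (m+1) 0 = 0 := rfl
    rw [h0]
    simp only [zero_mul, add_zero]
    have hsplit : ∀ l, auxS1 (m+1) (l+1) = auxS1 m l - (m:ℤ)^2 * auxS1 m (l+1) := fun l => rfl
    simp only [hsplit, sub_mul]
    rw [Finset.sum_sub_distrib]
    have hB : ∑ l ∈ Finset.range (m+1), (m:ℤ)^2 * auxS1 m (l+1) * (stirling2Lev 2 (l+1) j : ℤ)
        = (m:ℤ)^2 * ((if m = j then 1 else 0) - auxS1 m 0 * (stirling2Lev 2 0 j : ℤ)) := by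
      simp only [mul_assoc]
      rw [← Finset.mul_sum]
      congr 1
      have : ∑ l ∈ Finset.range (m+2), auxS1 m l * (stirling2Lev 2 l j : ℤ)
          = (∑ l ∈ Finset.range (m+1), auxS1 m (l+1) * (stirling2Lev 2 (l+1) j : ℤ))
            + auxS1 m 0 * (stirling2Lev 2 0 j : ℤ) := Finset.sum_range_succ' _ _
      have h2 : ∑ l ∈ Finset.range (m+2), auxS1 m l * (stirling2Lev 2 l j : ℤ)
          = if m = j then 1 else 0 := by
        rw [Finset.sum_range_succ, auxS1_zero m (m+1) (by omega)]
        simpa using ih j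
      omega
    rw [hB]
    cases j with
    | zero =>
      have hz : ∀ l, stirling2Lev 2 (l+1) 0 = 0 := fun l => rfl
      simp only [hz, Nat.cast_zero, mul_zero, Finset.sum_const_zero, zero_sub]
      have : (stirling2Lev 2 0 0 : ℤ) = 1 := rfl
      rw [this]
      cases m with
      | zero => simp
      | succ m =>
        have : auxS1 (m+1) 0 = 0 := rfl
        rw [this]
        simp
    | succ j =>
      have hst : ∀ l, (stirling2Lev 2 (l+1) (j+1) : ℤ)
          = (stirling2Lev 2 l j : ℤ) + ((j:ℤ)+1)^2 * (stirling2Lev 2 l (j+1) : ℤ) := by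
        intro l
        show ((stirling2Lev 2 l j + (j + 1) ^ 2 * stirling2Lev 2 l (j+1) : ℕ) : ℤ) = _
        push_cast
        ring
      simp only [hst, mul_add]
      rw [Finset.sum_add_distrib, ih j]
      have : ∑ l ∈ Finset.range (m+1), auxS1 m l * (((j:ℤ)+1)^2 * (stirling2Lev 2 l (j+1) : ℤ))
          = ((j:ℤ)+1)^2 * (if m = j + 1 then 1 else 0) := by
        rw [← ih (j+1), Finset.mul_sum]
        congr 1; ext l; ring
      rw [this]
      have hs0 : (stirling2Lev 2 0 (j+1) : ℤ) = 0 := rfl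
      rw [hs0, mul_zero, sub_zero]
      by_cases h1 : m = j
      · subst h1
        have h2 : ¬ (m = m + 1) := by omega
        simp [h2]
      · by_cases h2 : m = j + 1
        · subst h2
          have h3 : ¬ (j + 1 + 1 = j + 1) := by omega
          push_cast
          simp [h1, h3]
        · have h3 : ¬ (m + 1 = j + 1) := by omega
          simp [h1, h2, h3]
lemma key (m : ℕ) (k : ℤ) :
    ∑ l ∈ Finset.range (m+1), (stirling1Lev2 m l : ℚ) * polyBernoulliLev2 l k
      = (Nat.factorial (2*m) : ℚ) / ((2*m+1 : ℚ))^k := by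
  unfold polyBernoulliLev2
  have step1 : ∑ l ∈ Finset.range (m+1), (stirling1Lev2 m l : ℚ) *
      (∑ j ∈ Finset.range (l + 1),
        (stirling2Lev 2 l j : ℚ) * (-1) ^ (l - j) * (Nat.factorial (2 * j) : ℚ)
          / ((2 * j + 1 : ℚ)) ^ k)
      = ∑ l ∈ Finset.range (m+1), ∑ j ∈ Finset.range (m+1),
        (stirling1Lev2 m l : ℚ) *
          ((stirling2Lev 2 l j : ℚ) * (-1) ^ (l - j) * (Nat.factorial (2 * j) : ℚ)
            / ((2 * j + 1 : ℚ)) ^ k) := by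
    apply Finset.sum_congr rfl
    intro l hl
    rw [Finset.mul_sum]
    apply Finset.sum_subset
    · apply Finset.range_subset_range.mpr
      simp only [Finset.mem_range] at hl
      omega
    · intro j _ hj
      simp only [Finset.mem_range, not_lt] at hj
      rw [stirling2_zero l j (by omega)]
      simp
  rw [step1, Finset.sum_comm]
  have hterm : ∀ j ∈ Finset.range (m+1),
      (∑ l ∈ Finset.range (m+1), (stirling1Lev2 m l : ℚ) *
        ((stirling2Lev 2 l j : ℚ) * (-1) ^ (l - j) * (Nat.factorial (2 * j) : ℚ)
          / ((2 * j + 1 : ℚ)) ^ k))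
      = if m = j then (Nat.factorial (2*m) : ℚ) / ((2*m+1 : ℚ))^k else 0 := by
    intro j hj
    simp only [Finset.mem_range] at hj
    have hsum : ∑ l ∈ Finset.range (m+1), (stirling1Lev2 m l : ℚ) *
        ((stirling2Lev 2 l j : ℚ) * (-1) ^ (l - j) * (Nat.factorial (2 * j) : ℚ)
          / ((2 * j + 1 : ℚ)) ^ k)
        = ((Nat.factorial (2*j) : ℚ) / ((2*j+1 : ℚ))^k) * ((-1)^(m-j) *
          ((∑ l ∈ Finset.range (m+1), auxS1 m l * (stirling2Lev 2 l j : ℤ) : ℤ) : ℚ)) := by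
      push_cast
      rw [Finset.mul_sum, Finset.mul_sum]
      apply Finset.sum_congr rfl
      intro l hl
      simp only [Finset.mem_range] at hl
      rcases lt_or_ge l j with hlj | hjl
      · rw [stirling2_zero l j hlj]
        push_cast
        simp
      · have hlm : l ≤ m := by omega
        rw [auxS1_eq m l]
        have hp : ((-1:ℚ))^(m-j) * ((-1:ℚ))^(m-l) = ((-1:ℚ))^(l-j) := by
          rw [← pow_add]
          have h : (m-j)+(m-l) = (l-j) + 2*(m-l) := by omega
          rw [h, pow_add, pow_mul]
          norm_num
        push_cast
        linear_combination (-(stirling1Lev2 m l : ℚ) * (stirling2Lev 2 l j : ℚ) *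
          (Nat.factorial (2*j) : ℚ) / ((2*(j:ℚ)+1))^k) * hp
    rw [hsum, orth m j]
    by_cases h : m = j
    · subst h; simp
    · simp [h]
  rw [Finset.sum_congr rfl hterm, Finset.sum_ite_eq]
  simp


/-- `𝔠_{2n}^{(k)} = Σ_{m=1}^n Σ_{l=1}^m ((−4)^{n−m}/(2m)!) S₁(n,m;2) S₁(m,l;2) 𝔅_{2l}^{(k)}`. -/
theorem stmt_9 (n : ℕ) (hn : 1 ≤ n) (k : ℤ) :
    polyCauchyLev2 n k =
      ∑ m ∈ Finset.Icc 1 n, ∑ l ∈ Finset.Icc 1 m,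
        ((-4 : ℚ) ^ (n - m) / (Nat.factorial (2 * m) : ℚ)) * (stirling1Lev2 n m : ℚ)
          * (stirling1Lev2 m l : ℚ) * polyBernoulliLev2 l k := by
  have hIcc : ∀ N : ℕ, Finset.range (N+1) = insert 0 (Finset.Icc 1 N) := by
    intro N; ext x; simp [Nat.lt_succ_iff]; omega
  have hnot : ∀ N : ℕ, 0 ∉ Finset.Icc 1 N := by intro N; simp
  obtain ⟨n', rfl⟩ : ∃ n', n = n' + 1 := ⟨n - 1, by omega⟩
  rw [polyCauchyLev2, hIcc (n'+1), Finset.sum_insert (hnot _)]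
  have h0 : (stirling1Lev2 (n'+1) 0 : ℚ) = 0 := by norm_num [stirling1Lev2]
  rw [h0, zero_mul, zero_div, zero_add]
  apply Finset.sum_congr rfl
  intro m hm
  obtain ⟨hm1, -⟩ := Finset.mem_Icc.mp hm
  obtain ⟨m', rfl⟩ : ∃ m', m = m' + 1 := ⟨m - 1, by omega⟩
  have hinner : ∑ l ∈ Finset.Icc 1 (m'+1),
      ((-4 : ℚ) ^ (n'+1 - (m'+1)) / (Nat.factorial (2 * (m'+1)) : ℚ))
        * (stirling1Lev2 (n'+1) (m'+1) : ℚ) * (stirling1Lev2 (m'+1) l : ℚ)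
        * polyBernoulliLev2 l k
      = ((-4 : ℚ) ^ (n'+1 - (m'+1)) / (Nat.factorial (2 * (m'+1)) : ℚ))
        * (stirling1Lev2 (n'+1) (m'+1) : ℚ)
        * ∑ l ∈ Finset.range (m'+2), (stirling1Lev2 (m'+1) l : ℚ)
            * polyBernoulliLev2 l k := by
    rw [Finset.mul_sum, hIcc (m'+1), Finset.sum_insert (hnot _)]
    have h0' : (stirling1Lev2 (m'+1) 0 : ℚ) = 0 := by norm_num [stirling1Lev2]
    rw [h0', zero_mul, mul_zero, zero_add]
    apply Finset.sum_congr rfl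
    intro l _
    ring
  rw [hinner, key (m'+1) k]
  have hfac : (Nat.factorial (2 * (m'+1)) : ℚ) ≠ 0 := by
    exact_mod_cast Nat.factorial_ne_zero _
  field_simp
end

section
/- For every integer n ≥ 1 and every integer k, one has (1/(2n)!) Σ_{m=0}^{n} S₁(n,m;2) · 𝔅_{2m}^{(k)} = 1/(2n+1)^k. -/
open Finset

lemma neg_one_pow_sub_of_le {R : Type*} [Ring R] {m j : ℕ} (h : j ≤ m) :
    (-1 : R) ^ (m - j) = (-1) ^ m * (-1) ^ j := by
  obtain ⟨d, rfl⟩ := Nat.exists_eq_add_of_le h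
  rw [Nat.add_sub_cancel_left, pow_add, pow_mul_comm, mul_assoc, ← pow_add, ← two_mul, pow_mul,
    neg_one_sq, one_pow, mul_one]

section Stirling

variable {s : ℕ}

@[simp] lemma stirling2Lev_zero_zero : stirling2Lev s 0 0 = 1 := rfl

@[simp] lemma stirling2Lev_zero_succ (k : ℕ) : stirling2Lev s 0 (k + 1) = 0 := rfl

@[simp] lemma stirling2Lev_succ_zero (n : ℕ) : stirling2Lev s (n + 1) 0 = 0 := rfl

lemma stirling2Lev_succ_succ (n k : ℕ) :
    stirling2Lev s (n + 1) (k + 1) = stirling2Lev s n k + (k + 1) ^ s * stirling2Lev s n (k + 1) :=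
  rfl

lemma stirling2Lev_eq_zero_of_lt_s11 {n k : ℕ} (h : n < k) : stirling2Lev s n k = 0 := by
  induction n generalizing k with
  | zero => obtain ⟨k, rfl⟩ := Nat.exists_eq_add_of_lt h; rfl
  | succ n ih =>
    obtain ⟨k, rfl⟩ := Nat.exists_eq_succ_of_ne_zero (by omega : k ≠ 0)
    rw [stirling2Lev_succ_succ, ih (by omega), ih (by omega), mul_zero, add_zero]

lemma stirling1Lev2_zero_right (n : ℕ) : stirling1Lev2 n 0 = if n = 0 then 1 else 0 := by
  cases n <;> rfl

lemma stirling1Lev2_succ_succ (n k : ℕ) :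
    stirling1Lev2 (n + 1) (k + 1) = stirling1Lev2 n k + n ^ 2 * stirling1Lev2 n (k + 1) :=
  rfl

lemma stirling1Lev2_eq_zero_of_lt {n k : ℕ} (h : n < k) : stirling1Lev2 n k = 0 := by
  induction n generalizing k with
  | zero => obtain ⟨k, rfl⟩ := Nat.exists_eq_add_of_lt h; rfl
  | succ n ih =>
    obtain ⟨k, rfl⟩ := Nat.exists_eq_succ_of_ne_zero (by omega : k ≠ 0)
    rw [stirling1Lev2_succ_succ, ih (by omega), ih (by omega), mul_zero, add_zero]

end Stirling

theorem sum_neg_one_pow_mul_stirling1Lev2_mul_stirling2Lev {R : Type*} [CommRing R]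
    (n j : ℕ) {N : ℕ} (hN : n < N) :
    ∑ m ∈ range N, (-1 : R) ^ m * stirling1Lev2 n m * stirling2Lev 2 m j
      = if j = n then (-1) ^ n else 0 := by
  induction n generalizing j N with
  | zero =>
    obtain ⟨N, rfl⟩ : ∃ N', N = N' + 1 := ⟨N - 1, by omega⟩
    rw [sum_range_succ']
    cases j <;> simp [stirling1Lev2_eq_zero_of_lt, stirling1Lev2_zero_right]
  | succ n ih =>
    obtain ⟨N, rfl⟩ : ∃ N', N = N' + 1 := ⟨N - 1, by omega⟩
    have hrec (m : ℕ) : (-1 : R) ^ (m + 1) * stirling1Lev2 (n + 1) (m + 1) * stirling2Lev 2 (m + 1) j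
        = -((-1) ^ m * stirling1Lev2 n m * stirling2Lev 2 (m + 1) j)
          + n ^ 2 * ((-1) ^ (m + 1) * stirling1Lev2 n (m + 1) * stirling2Lev 2 (m + 1) j) := by
      rw [stirling1Lev2_succ_succ]; push_cast; ring
    have hshift : (n : R) ^ 2 * ∑ m ∈ range N,
        (-1 : R) ^ (m + 1) * stirling1Lev2 n (m + 1) * stirling2Lev 2 (m + 1) j
        = n ^ 2 * if j = n then (-1) ^ n else 0 := by
      rw [← ih j (N := N + 1) (by omega), sum_range_succ', mul_add, left_eq_add]
      cases n <;> simp [stirling1Lev2_zero_right]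
    rw [sum_range_succ', sum_congr rfl fun m _ => hrec m, sum_add_distrib,
      sum_neg_distrib, ← mul_sum, hshift]
    cases j with
    | zero => cases n <;> simp [stirling1Lev2_zero_right]
    | succ i =>
      have hsplit : ∑ m ∈ range N, (-1 : R) ^ m * stirling1Lev2 n m * stirling2Lev 2 (m + 1) (i + 1)
          = (if i = n then (-1) ^ n else 0) + (i + 1) ^ 2 * if i + 1 = n then (-1) ^ n else 0 := by
        rw [← ih i (N := N) (by omega), ← ih (i + 1) (N := N) (by omega), mul_sum, ← sum_add_distrib]
        refine sum_congr rfl fun m _ => ?_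
        rw [stirling2Lev_succ_succ]; push_cast; ring
      rw [hsplit, stirling2Lev_zero_succ, Nat.cast_zero, mul_zero, add_zero]
      split_ifs <;> first | omega | (subst_vars; push_cast; ring)

theorem sum_stirling1Lev2_mul_sum_stirling2Lev {R : Type*} [CommRing R] (a : ℕ → R) (n : ℕ) :
    ∑ m ∈ range (n + 1), (stirling1Lev2 n m : R) *
        ∑ j ∈ range (m + 1), (stirling2Lev 2 m j : R) * (-1) ^ (m - j) * a j
      = a n := by
  have hextend : ∀ m ∈ range (n + 1),
      ∑ j ∈ range (m + 1), (stirling2Lev 2 m j : R) * (-1) ^ (m - j) * a j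
        = ∑ j ∈ range (n + 1), (-1) ^ m * (stirling2Lev 2 m j : R) * ((-1) ^ j * a j) := by
    intro m hm
    refine sum_subset_zero_on_sdiff (range_subset_range.2 (mem_range.1 hm)) ?_ fun j hj => ?_
    · intro j hj
      rw [stirling2Lev_eq_zero_of_lt_s11 (by simp at hj; omega), Nat.cast_zero, mul_zero, zero_mul]
    · rw [neg_one_pow_sub_of_le (by simpa [Nat.lt_succ_iff] using hj)]
      ring
  calc ∑ m ∈ range (n + 1), (stirling1Lev2 n m : R) *
        ∑ j ∈ range (m + 1), (stirling2Lev 2 m j : R) * (-1) ^ (m - j) * a j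
      = ∑ j ∈ range (n + 1), (-1) ^ j * a j *
          ∑ m ∈ range (n + 1), (-1) ^ m * (stirling1Lev2 n m : R) * stirling2Lev 2 m j := by
        rw [sum_congr rfl fun m hm => by rw [hextend m hm]]
        simp_rw [mul_sum]
        rw [sum_comm]
        refine sum_congr rfl fun j _ => sum_congr rfl fun m _ => by ring
    _ = ∑ j ∈ range (n + 1), (-1) ^ j * a j * if j = n then (-1) ^ n else 0 := by
        simp_rw [sum_neg_one_pow_mul_stirling1Lev2_mul_stirling2Lev n _ (Nat.lt_succ_self n)]
    _ = a n := by
        simp only [mul_ite, mul_zero, sum_ite_eq', mem_range, Nat.lt_succ_self, if_true]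
        rw [mul_right_comm, ← pow_add, ← two_mul, pow_mul, neg_one_sq, one_pow, one_mul]

theorem stmt_11_general (n : ℕ) (k : ℤ) :
    (1 / (Nat.factorial (2 * n) : ℚ)) *
        ∑ m ∈ Finset.range (n + 1), (stirling1Lev2 n m : ℚ) * polyBernoulliLev2 m k
      = 1 / ((2 * n + 1 : ℚ)) ^ k := by
  have hB (m : ℕ) : polyBernoulliLev2 m k = ∑ j ∈ range (m + 1), (stirling2Lev 2 m j : ℚ)
      * (-1) ^ (m - j) * ((Nat.factorial (2 * j) : ℚ) / (2 * j + 1) ^ k) := by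
    simp only [polyBernoulliLev2, mul_div_assoc]
  simp_rw [hB]
  rw [sum_stirling1Lev2_mul_sum_stirling2Lev (fun j => (Nat.factorial (2 * j) : ℚ) / (2 * j + 1) ^ k)]
  field_simp

/-- `(1/(2n)!) Σ_{m=0}^n S₁(n,m;2) 𝔅_{2m}^{(k)} = 1/(2n+1)^k`. -/
theorem stmt_11 (n : ℕ) (hn : 1 ≤ n) (k : ℤ) :
    (1 / (Nat.factorial (2 * n) : ℚ)) *
        ∑ m ∈ Finset.range (n + 1), (stirling1Lev2 n m : ℚ) * polyBernoulliLev2 m k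
      = 1 / ((2 * n + 1 : ℚ)) ^ k :=
  stmt_11_general n k
end

section
/- For all integers n ≥ 1 and k ≥ 1, the integer 𝔅_{2n}^{(−k)} is divisible by 6. -/
/-- Poly-Bernoulli numbers with level `2` and nonpositive upper index `−k`:
`𝔅_{2n}^{(−k)} = Σ_{m=0}^n S₂(n,m;2) (−1)^{n−m} (2m)! (2m+1)^k`, an integer. -/
def polyBernoulliLev2Neg (n k : ℕ) : ℤ :=
  ∑ m ∈ Finset.range (n + 1),
    (stirling2Lev 2 n m : ℤ) * (-1) ^ (n - m) * (Nat.factorial (2 * m) : ℤ)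
      * (2 * m + 1 : ℤ) ^ k

/-- For `n, k ≥ 1`, `𝔅_{2n}^{(−k)} ≡ 0 (mod 6)`. -/
theorem stmt_14 (n k : ℕ) (hn : 1 ≤ n) (hk : 1 ≤ k) :
    (6 : ℤ) ∣ polyBernoulliLev2Neg n k := by
  apply Finset.dvd_sum
  intro m _
  match m with
  | 0 =>
    obtain ⟨n', rfl⟩ := Nat.exists_eq_succ_of_ne_zero (Nat.one_le_iff_ne_zero.mp hn)
    simp [stirling2Lev]
  | 1 =>
    obtain ⟨k', rfl⟩ := Nat.exists_eq_add_of_le hk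
    rw [mul_assoc]
    apply dvd_mul_of_dvd_right
    exact ⟨3 ^ k', by push_cast [Nat.factorial, pow_add]; ring⟩
  | m + 2 =>
    have h : (6 : ℕ) ∣ (2 * (m + 2)).factorial := by
      have : (4 : ℕ).factorial ∣ (2 * (m + 2)).factorial :=
        Nat.factorial_dvd_factorial (by omega)
      exact dvd_trans (by norm_num [Nat.factorial]) this
    exact Dvd.dvd.mul_right (Dvd.dvd.mul_left (Int.natCast_dvd_natCast.mpr h) _) _
end

section
/- For all integers n ≥ 1 and k ≥ 1, one has 𝔅_{2n}^{(−k)} ≡ (−1)^{n−1} · 2 · 3^k (mod 5); consequently 𝔅_{2n}^{(−k)} mod 5 depends only on n mod 2 and k mod 4, taking the values 3, 4, 2, 1 for n even and k ≡ 0, 1, 2, 3 (mod 4) respectively, and 2, 1, 3, 4 for n odd and k ≡ 0, 1, 2, 3 (mod 4) respectively. -/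
lemma stirling2Lev_one (s : ℕ) : ∀ n, stirling2Lev s (n + 1) 1 = 1
  | 0 => by simp [stirling2Lev]
  | n + 1 => by
      show stirling2Lev s (n + 1) 0 + (0 + 1) ^ s * stirling2Lev s (n + 1) (0 + 1) = 1
      rw [stirling2Lev_one s n]
      simp [stirling2Lev]

lemma key_s15 (n k : ℕ) (hn : 1 ≤ n) (hk : 1 ≤ k) :
    ((polyBernoulliLev2Neg n k : ℤ) : ZMod 5) = (-1) ^ (n - 1) * 2 * 3 ^ k := by
  obtain ⟨p, rfl⟩ : ∃ p, n = p + 1 := ⟨n - 1, by omega⟩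
  unfold polyBernoulliLev2Neg
  push_cast
  rw [Finset.sum_eq_single 1]
  · rw [stirling2Lev_one 2 p]
    norm_num [Nat.factorial]
  · intro b hb hb1
    match b with
    | 0 => simp [stirling2Lev]
    | 1 => exact absurd rfl hb1
    | 2 =>
      have h0 : (2 * ((2:ℕ) : ZMod 5) + 1) = 0 := by decide
      rw [h0, zero_pow (by omega : k ≠ 0), mul_zero]
    | (m+3) =>
      have h5 : (5:ℕ) ∣ Nat.factorial (2 * (m + 3)) :=
        Nat.dvd_factorial (by norm_num) (by omega)
      have hz : ((Nat.factorial (2 * (m + 3)) : ℕ) : ZMod 5) = 0 :=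
        (ZMod.natCast_eq_zero_iff _ _).mpr h5
      push_cast at hz
      rw [hz]; ring
  · intro h
    exact absurd (Finset.mem_range.mpr (by omega)) h

/-- For `n, k ≥ 1`, `𝔅_{2n}^{(−k)} ≡ (−1)^{n−1}·2·3^k (mod 5)`; consequently
`𝔅_{2n}^{(−k)} mod 5` depends only on `n mod 2` and `k mod 4`, with the table of values
`3, 4, 2, 1` for even `n` and `k ≡ 0, 1, 2, 3 (mod 4)`, and `2, 1, 3, 4` for odd `n`. -/
theorem stmt_15 (n k : ℕ) (hn : 1 ≤ n) (hk : 1 ≤ k) :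
    polyBernoulliLev2Neg n k ≡ (-1) ^ (n - 1) * 2 * 3 ^ k [ZMOD 5] ∧
    polyBernoulliLev2Neg n k % 5 =
      if n % 2 = 0 then
        (if k % 4 = 0 then 3 else if k % 4 = 1 then 4 else if k % 4 = 2 then 2 else 1)
      else
        (if k % 4 = 0 then 2 else if k % 4 = 1 then 1 else if k % 4 = 2 then 3 else 4) := by
  have hkey := key_s15 n k hn hk
  have h1 : polyBernoulliLev2Neg n k ≡ (-1) ^ (n - 1) * 2 * 3 ^ k [ZMOD 5] := by
    refine (ZMod.intCast_eq_intCast_iff _ _ 5).mp ?_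
    push_cast
    rw [hkey]
  refine ⟨h1, ?_⟩
  set v : ℤ := if n % 2 = 0 then
        (if k % 4 = 0 then 3 else if k % 4 = 1 then 4 else if k % 4 = 2 then 2 else 1)
      else
        (if k % 4 = 0 then 2 else if k % 4 = 1 then 1 else if k % 4 = 2 then 3 else 4) with hv
  have h2 : ((-1 : ℤ)) ^ (n - 1) * 2 * 3 ^ k ≡ v [ZMOD 5] := by
    refine (ZMod.intCast_eq_intCast_iff _ _ 5).mp ?_
    push_cast
    have hpow : (3 : ZMod 5) ^ k = 3 ^ (k % 4) := by
      conv_lhs => rw [← Nat.div_add_mod k 4]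
      rw [pow_add, pow_mul, (by decide : (3:ZMod 5)^4 = 1), one_pow, one_mul]
    have hsgn : ((-1 : ZMod 5)) ^ (n - 1) = (-1) ^ ((n - 1) % 2) := by
      conv_lhs => rw [← Nat.div_add_mod (n - 1) 2]
      rw [pow_add, pow_mul, neg_one_sq, one_pow, one_mul]
    rw [hpow, hsgn, hv]
    rcases Nat.mod_two_eq_zero_or_one n with h2 | h2 <;>
      rcases (by omega : k % 4 = 0 ∨ k % 4 = 1 ∨ k % 4 = 2 ∨ k % 4 = 3) with h4|h4|h4|h4 <;>
      have hn1 : (n - 1) % 2 = 1 - n % 2 := by omega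
    all_goals simp [h2, h4, hn1] <;> decide
  have hfin : polyBernoulliLev2Neg n k % 5 = v % 5 := h1.trans h2
  rw [hfin, hv]
  split_ifs <;> decide
end

section
/- (von Staudt–Clausen theorem with level 2) For every integer n ≥ 1, the rational number 𝔅_{2n} + Σ_{p} (−1)^{n − (p−1)/2} / p is an integer, where the sum runs over all odd primes p such that p − 1 divides 2n, and 𝔅_{2n} = 𝔅_{2n}^{(1)} is the Bernoulli number with level 2. -/
open Finset
open scoped Nat

theorem Nat.choose_mul_mul_sub (N s : ℕ) :
    (N + 2).choose (s + 1) * ((s + 1) * (N + 1 - s)) = (N + 2) * (N + 1) * N.choose s := by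
  calc (N + 2).choose (s + 1) * ((s + 1) * (N + 1 - s))
      = (N + 2) * ((N + 1).choose s * (N + 1 - s)) := by
        rw [← mul_assoc, ← Nat.add_one_mul_choose_eq]; ring
    _ = (N + 2) * (N + 1) * N.choose s := by
        rw [← Nat.choose_succ_right_eq, ← Nat.add_one_mul_choose_eq, mul_assoc]

/-- The `2m`-th central difference of `x ^ (2n)` at `0`. -/
def centralDiffSum (n m : ℕ) : ℤ :=
  ∑ r ∈ range (2 * m + 1), (-1) ^ r * ((2 * m).choose r : ℤ) * (((m : ℤ) - r) ^ 2) ^ n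

theorem centralDiffSum_zero (m : ℕ) : centralDiffSum 0 m = if m = 0 then 1 else 0 := by
  simp [centralDiffSum, Int.alternating_sum_range_choose]

theorem centralDiffSum_succ_zero (n : ℕ) : centralDiffSum (n + 1) 0 = 0 := by
  simp [centralDiffSum]

/-- Since `(k+1-r)^2 = (k+1)^2 - r(2k+2-r)` and `C(2k+2,r) r (2k+2-r) = (2k+2)(2k+1) C(2k,r-1)`,
the extra factor `(k+1-r)^2` yields the level-2 Stirling recurrence. -/
theorem centralDiffSum_succ_succ (n k : ℕ) :
    centralDiffSum (n + 1) (k + 1) =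
      (2 * k + 2) * (2 * k + 1) * centralDiffSum n k + (k + 1) ^ 2 * centralDiffSum n (k + 1) := by
  simp only [centralDiffSum]
  rw [show 2 * (k + 1) = 2 * k + 2 by ring]
  have hchoose (s : ℕ) (hs : s ≤ 2 * k + 1) :
      ((2 * k + 2).choose (s + 1) : ℤ) * ((s + 1) * (2 * k + 1 - s)) =
        (2 * k + 2) * (2 * k + 1) * (2 * k).choose s := by
    have h := Nat.choose_mul_mul_sub (2 * k) s
    zify [hs] at h
    exact h
  have hdiff : ∑ r ∈ range (2 * k + 2 + 1), (-1 : ℤ) ^ r * ((2 * k + 2).choose r : ℤ) *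
        (r * (2 * k + 2 - r)) * (((k + 1 : ℕ) - r : ℤ) ^ 2) ^ n =
      -((2 * k + 2) * (2 * k + 1) * ∑ s ∈ range (2 * k + 1),
        (-1 : ℤ) ^ s * ((2 * k).choose s : ℤ) * (((k : ℤ) - s) ^ 2) ^ n) := by
    rw [sum_range_succ', sum_range_succ, mul_sum, ← sum_neg_distrib]
    push_cast
    simp only [show (2 * k + 2 : ℤ) - (2 * k + 1 + 1) = 0 by ring, zero_mul, mul_zero, add_zero]
    refine sum_congr rfl fun s hs => ?_
    rw [mem_range] at hs
    linear_combination (-(-1) ^ s * (((k : ℤ) - s) ^ 2) ^ n) * hchoose s (by omega)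
  have hterm (r : ℕ) :
      (-1 : ℤ) ^ r * ((2 * k + 2).choose r : ℤ) * (((k + 1 : ℕ) - r : ℤ) ^ 2) ^ (n + 1) =
      (k + 1) ^ 2 * ((-1) ^ r * ((2 * k + 2).choose r : ℤ) * (((k + 1 : ℕ) - r : ℤ) ^ 2) ^ n) -
        (-1) ^ r * ((2 * k + 2).choose r : ℤ) * (r * (2 * k + 2 - r)) *
          (((k + 1 : ℕ) - r : ℤ) ^ 2) ^ n := by
    push_cast
    ring
  rw [sum_congr rfl fun r _ => hterm r, sum_sub_distrib, ← mul_sum, hdiff]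
  ring

theorem factorial_mul_stirling2Lev_two (n m : ℕ) :
    ((2 * m).factorial : ℤ) * stirling2Lev 2 n m = centralDiffSum n m := by
  induction n generalizing m with
  | zero => cases m <;> simp [centralDiffSum_zero, stirling2Lev]
  | succ n ih =>
    cases m with
    | zero => simp [centralDiffSum_succ_zero, stirling2Lev]
    | succ k =>
      rw [centralDiffSum_succ_succ, ← ih, ← ih, stirling2Lev,
        show 2 * (k + 1) = 2 * k + 1 + 1 by ring, Nat.factorial_succ, Nat.factorial_succ]
      push_cast
      ring

theorem ZMod.natCast_choose_pred_eq_neg_one_pow {p : ℕ} [hp : Fact p.Prime] {r : ℕ} (hr : r < p) :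
    ((p - 1).choose r : ZMod p) = (-1) ^ r := by
  induction r with
  | zero => simp
  | succ s ih =>
    have hpascal : p.choose (s + 1) = (p - 1).choose s + (p - 1).choose (s + 1) := by
      conv_lhs => rw [← Nat.sub_add_cancel hp.out.one_le]
      exact Nat.choose_succ_succ _ _
    have hvanish : (p.choose (s + 1) : ZMod p) = 0 :=
      (ZMod.natCast_eq_zero_iff _ _).mpr (hp.out.dvd_choose_self s.succ_ne_zero hr)
    rw [hpascal, Nat.cast_add, ih (by omega)] at hvanish
    rw [pow_succ]
    linear_combination hvanish

theorem FiniteField.sum_pow_of_ne_zero {K : Type*} [Field K] [Fintype K] {i : ℕ} (hi : i ≠ 0) :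
    ∑ x : K, x ^ i = if Fintype.card K - 1 ∣ i then -1 else 0 := by
  classical
  rw [← FiniteField.sum_pow_units K i]
  exact (Fintype.sum_of_injective _ Units.val_injective _ _
    (fun x hx => by
      obtain rfl : x = 0 := by_contra fun h => hx ⟨Units.mk0 x h, rfl⟩
      exact zero_pow hi)
    (fun _ => rfl)).symm

theorem ZMod.sum_range_natCast {M : Type*} [AddCommMonoid M] (p : ℕ) [NeZero p]
    (f : ZMod p → M) : ∑ r ∈ range p, f r = ∑ x, f x :=
  sum_nbij' (↑) ZMod.val (by simp) (by simp [ZMod.val_lt])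
    (fun _ hr => ZMod.val_cast_of_lt (mem_range.1 hr)) (fun x _ => ZMod.natCast_zmod_val x)
    (fun _ _ => rfl)

theorem centralDiffSum_cast_zmod {p m : ℕ} [Fact p.Prime] (hpm : p = 2 * m + 1) {n : ℕ}
    (hn : n ≠ 0) : (centralDiffSum n m : ZMod p) = if p - 1 ∣ 2 * n then -1 else 0 := by
  have hm : 2 * m = p - 1 := by omega
  unfold centralDiffSum
  push_cast
  calc ∑ r ∈ range (2 * m + 1), (-1 : ZMod p) ^ r * ((2 * m).choose r : ZMod p) *
        (((m : ZMod p) - r) ^ 2) ^ n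
      = ∑ r ∈ range p, (((m : ZMod p) - r) ^ 2) ^ n := by
        rw [← hpm]
        refine sum_congr rfl fun r hr => ?_
        rw [hm, ZMod.natCast_choose_pred_eq_neg_one_pow (mem_range.1 hr), ← mul_pow]
        simp
    _ = ∑ x : ZMod p, x ^ (2 * n) :=
        (ZMod.sum_range_natCast p fun x => (((m : ZMod p) - x) ^ 2) ^ n).trans
          (Fintype.sum_equiv (Equiv.subLeft (m : ZMod p)) _ (fun x => x ^ (2 * n))
            fun x => by simp [← pow_mul])
    _ = if p - 1 ∣ 2 * n then -1 else 0 := by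
        rw [FiniteField.sum_pow_of_ne_zero (by omega), ZMod.card]

theorem Nat.mul_dvd_factorial_of_lt {a b : ℕ} (ha : 0 < a) (hab : a < b) : a * b ∣ b ! := by
  rw [← Nat.mul_factorial_pred (by omega : b ≠ 0), mul_comm a]
  exact mul_dvd_mul_left b (Nat.dvd_factorial ha (by omega))

theorem Nat.dvd_factorial_pred_of_not_prime {n : ℕ} (h0 : n ≠ 0) (hn : ¬ n.Prime) (h4 : n ≠ 4) :
    n ∣ (n - 1)! := by
  rcases eq_or_ne n 1 with rfl | h1
  · simp
  have ha : 2 ≤ n.minFac := (Nat.minFac_prime h1).two_le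
  have hab : n.minFac ≤ n / n.minFac := Nat.minFac_le_div (by omega) hn
  have hn_eq : n = n.minFac * (n / n.minFac) := (Nat.mul_div_cancel' n.minFac_dvd).symm
  set a := n.minFac
  set b := n / a
  rcases hab.lt_or_eq with hlt | hab
  · have hb : b < n := by nlinarith
    calc n = a * b := hn_eq
      _ ∣ b ! := Nat.mul_dvd_factorial_of_lt (by omega) hlt
      _ ∣ (n - 1)! := Nat.factorial_dvd_factorial (by omega)
  · rw [← hab] at hn_eq
    have ha3 : 3 ≤ a := by
      by_contra! h
      exact h4 (by rw [hn_eq, show a = 2 by omega])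
    have h2a : 2 * a < n := by nlinarith
    calc n = a * a := hn_eq
      _ ∣ a * (2 * a) := mul_dvd_mul_left a (dvd_mul_left a 2)
      _ ∣ (2 * a)! := Nat.mul_dvd_factorial_of_lt (by omega) (by omega)
      _ ∣ (n - 1)! := Nat.factorial_dvd_factorial (by omega)

theorem dvd_factorial_mul_stirling2Lev_two_add {n m : ℕ} (hmn : m ≤ n) :
    ((2 * m + 1 : ℕ) : ℤ) ∣
      (2 * m)! * stirling2Lev 2 n m + if (2 * m + 1).Prime ∧ 2 * m ∣ 2 * n then 1 else 0 := by
  by_cases hp : (2 * m + 1).Prime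
  · have := Fact.mk hp
    have hn : n ≠ 0 := by
      rintro rfl
      obtain rfl : m = 0 := by omega
      exact Nat.not_prime_one hp
    rw [factorial_mul_stirling2Lev_two, ← ZMod.intCast_zmod_eq_zero_iff_dvd]
    push_cast
    rw [centralDiffSum_cast_zmod rfl hn, Nat.add_sub_cancel]
    by_cases hdvd : 2 * m ∣ 2 * n <;> simp [hp, hdvd]
  · rw [if_neg fun h => hp h.1, add_zero]
    refine Dvd.dvd.mul_right (Int.natCast_dvd_natCast.2 ?_) _
    simpa using Nat.dvd_factorial_pred_of_not_prime (by omega) hp (by omega)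

theorem Finset.sum_range_two_mul {M : Type*} [AddCommMonoid M] (f : ℕ → M) (n : ℕ) :
    ∑ i ∈ range (2 * n), f i = ∑ m ∈ range n, (f (2 * m) + f (2 * m + 1)) := by
  induction n with
  | zero => simp
  | succ n ih => rw [mul_add, sum_range_succ, sum_range_succ, sum_range_succ, ih, add_assoc]

theorem sum_oddPrimes_eq_sum_range (n : ℕ) :
    ∑ p ∈ (range (2 * n + 2)).filter (fun p => p.Prime ∧ p ≠ 2 ∧ (p - 1) ∣ 2 * n),
        (-1 : ℚ) ^ (n - (p - 1) / 2) / p =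
      ∑ m ∈ range (n + 1), (-1 : ℚ) ^ (n - m) *
        (if (2 * m + 1).Prime ∧ 2 * m ∣ 2 * n then 1 else 0) / (2 * m + 1) := by
  rw [sum_filter, show 2 * n + 2 = 2 * (n + 1) by ring, sum_range_two_mul]
  refine sum_congr rfl fun m _ => ?_
  have heven : ¬ ((2 * m).Prime ∧ 2 * m ≠ 2 ∧ (2 * m - 1) ∣ 2 * n) :=
    fun ⟨hp, h2, _⟩ => h2 (hp.even_iff.1 (even_two_mul m))
  rw [if_neg heven, zero_add]
  simp only [Nat.add_sub_cancel, ne_eq,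
    show 2 * m + 1 ≠ 2 by omega, not_false_eq_true, true_and, show 2 * m / 2 = m by omega]
  split_ifs <;> push_cast <;> ring

theorem stmt_17_general (n : ℕ) :
    ∃ z : ℤ,
      polyBernoulliLev2 n 1 +
        ∑ p ∈ (Finset.range (2 * n + 2)).filter (fun p => p.Prime ∧ p ≠ 2 ∧ (p - 1) ∣ 2 * n),
          (-1 : ℚ) ^ (n - (p - 1) / 2) / (p : ℚ)
      = (z : ℚ) := by
  suffices h : polyBernoulliLev2 n 1 + _ ∈ (Int.castRingHom ℚ).range by
    obtain ⟨z, hz⟩ := h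
    exact ⟨z, hz.symm⟩
  rw [sum_oddPrimes_eq_sum_range, polyBernoulliLev2, ← sum_add_distrib]
  refine Subring.sum_mem _ fun m hm => ?_
  obtain ⟨z, hz⟩ := dvd_factorial_mul_stirling2Lev_two_add (mem_range_succ_iff.1 hm)
  refine ⟨(-1) ^ (n - m) * z, ?_⟩
  have hz' := congrArg (Int.cast : ℤ → ℚ) hz
  push_cast at hz' ⊢
  rw [zpow_one, eq_intCast]
  field_simp
  push_cast
  linear_combination -(-1 : ℚ) ^ (n - m) * hz'

/-- Von Staudt–Clausen theorem with level `2`: for `n ≥ 1`,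
`𝔅_{2n} + Σ_p (−1)^{n−(p−1)/2}/p` is an integer, the sum running over all odd primes `p`
with `(p − 1) ∣ 2n` (all such primes satisfy `p ≤ 2n + 1`), where `𝔅_{2n} = 𝔅_{2n}^{(1)}`. -/
theorem stmt_17 (n : ℕ) (hn : 1 ≤ n) :
    ∃ z : ℤ,
      polyBernoulliLev2 n 1 +
        ∑ p ∈ (Finset.range (2 * n + 2)).filter (fun p => p.Prime ∧ p ≠ 2 ∧ (p - 1) ∣ 2 * n),
          (-1 : ℚ) ^ (n - (p - 1) / 2) / (p : ℚ)
      = (z : ℚ) :=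
  stmt_17_general n
end

section
/- For all integers n and k with 1 ≤ k ≤ n, the Stirling numbers of the second kind with level 2 admit the explicit expression S₂(n,k;2) = (2/(2k)!) · Σ_{j=1}^{k} (−1)^{k−j} · C(2k, k−j) · j^{2n}, where C(·,·) denotes a binomial coefficient (an identity in ℚ). -/
/-!
`S₂(n,k;2)` is the central factorial number `T(2n,2k) = δ^{2k} x^{2n} |_{x=0} / (2k)!`
(`centralFactorial n k`), where `δ f(x) = f(x + 1/2) - f(x - 1/2)`. Both satisfy
`T(n+1,k+1) = T(n,k) + (k+1)² T(n,k+1)`: multiplying by `x² - (k+1)²` kills the two outer terms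
of `δ^{2k+2}` and turns it into `(2k+2)(2k+1) δ^{2k}`. They also agree at `n = 0`. For `n ≥ 1`
the symmetric sum over `x = -k, …, k` folds onto `j = 1, …, k`, because `x^{2n}` is even and
vanishes at `0`.
-/

open Finset

theorem Nat.choose_add_two_succ_mul (m i : ℕ) :
    (m + 2).choose (i + 1) * ((i + 1) * (m + 1 - i)) = (m + 2) * (m + 1) * m.choose i := by
  have h₁ := Nat.add_one_mul_choose_eq (m + 1) i
  have h₂ := Nat.choose_mul_succ_eq m i
  calc (m + 2).choose (i + 1) * ((i + 1) * (m + 1 - i))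
      = (m + 2) * ((m + 1).choose i * (m + 1 - i)) := by rw [← mul_assoc, ← h₁, mul_assoc]
    _ = (m + 2) * (m + 1) * m.choose i := by rw [← h₂]; ring

section CentralDifference

variable {R : Type*} [CommRing R]

theorem sum_range_choose_mul_sq_sub_sq (k : ℕ) (g : R → R) :
    ∑ i ∈ range (2 * k + 3),
        (-1) ^ i * ((2 * k + 2).choose i : R) * ((((k : R) + 1 - i) ^ 2 - ((k : R) + 1) ^ 2) *
          g ((k : R) + 1 - i)) =
      (2 * k + 2) * (2 * k + 1) *
        ∑ i ∈ range (2 * k + 1), (-1) ^ i * ((2 * k).choose i : R) * g ((k : R) - i) := by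
  rw [sum_range_succ, sum_range_succ', mul_sum]
  have hlast : ((k : R) + 1 - ((2 * k + 2 : ℕ) : R)) ^ 2 - ((k : R) + 1) ^ 2 = 0 := by
    push_cast; ring
  simp only [hlast, Nat.cast_zero, sub_zero, sub_self, mul_zero, zero_mul, add_zero]
  refine sum_congr rfl fun i hi => ?_
  have hi : i ≤ 2 * k := Nat.lt_succ_iff.mp (mem_range.mp hi)
  have hc := congrArg (Nat.cast : ℕ → R) (Nat.choose_add_two_succ_mul (2 * k) i)
  push_cast [Nat.cast_sub (show i ≤ 2 * k + 1 by omega)] at hc ⊢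
  rw [show (k : R) + 1 - (i + 1) = k - i by ring]
  linear_combination ((-1 : R) ^ i * g ((k : R) - i)) * hc

theorem sum_range_choose_mul_eq_two_mul_of_even (k : ℕ) {g : R → R} (hg : ∀ x, g (-x) = g x)
    (hg0 : g 0 = 0) :
    ∑ i ∈ range (2 * k + 1), (-1) ^ i * ((2 * k).choose i : R) * g ((k : R) - i) =
      2 * ∑ j ∈ Icc 1 k, (-1) ^ (k - j) * ((2 * k).choose (k - j) : R) * g j := by
  set t : ℕ → R := fun i => (-1) ^ i * ((2 * k).choose i : R) * g ((k : R) - i)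
  have hsymm : ∀ i ≤ 2 * k, t (2 * k - i) = t i := by
    intro i hi
    have hsign : (-1 : R) ^ (2 * k - i) = (-1) ^ i := by
      rw [neg_one_pow_eq_pow_mod_two, show (2 * k - i) % 2 = i % 2 by omega,
        ← neg_one_pow_eq_pow_mod_two]
    simp only [t, Nat.choose_symm hi, hsign, Nat.cast_sub hi, Nat.cast_mul, Nat.cast_ofNat]
    rw [← hg]
    ring_nf
  have hupper : ∑ x ∈ range k, t (k + 1 + x) = ∑ i ∈ range k, t i := by
    rw [← sum_range_reflect]
    refine sum_congr rfl fun x hx => ?_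
    have hx : x < k := mem_range.mp hx
    rw [show k + 1 + (k - 1 - x) = 2 * k - x by omega, hsymm x (by omega)]
  have hlower : ∑ j ∈ Icc 1 k, (-1) ^ (k - j) * ((2 * k).choose (k - j) : R) * g j =
      ∑ i ∈ range k, t i := by
    refine sum_nbij' (k - ·) (k - ·) ?_ ?_ ?_ ?_ ?_ <;> intro j hj <;>
      simp only [mem_Icc, mem_range] at hj ⊢
    any_goals omega
    simp only [t, Nat.cast_sub hj.2, sub_sub_cancel]
  rw [show 2 * k + 1 = k + 1 + k by ring, sum_range_add, sum_range_succ, hupper, hlower]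
  simp only [t, sub_self, hg0, mul_zero, add_zero]
  ring

end CentralDifference

def centralFactorial (n k : ℕ) : ℚ :=
  (∑ i ∈ range (2 * k + 1), (-1) ^ i * ((2 * k).choose i : ℚ) * ((k : ℚ) - i) ^ (2 * n)) /
    (2 * k).factorial

theorem centralFactorial_zero_zero : centralFactorial 0 0 = 1 := by
  simp [centralFactorial]

theorem centralFactorial_zero_succ (k : ℕ) : centralFactorial 0 (k + 1) = 0 := by
  have h := Int.alternating_sum_range_choose_of_ne (n := 2 * (k + 1)) (by omega)
  simp only [centralFactorial, mul_zero, pow_zero, mul_one, div_eq_zero_iff]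
  left
  exact_mod_cast h

theorem centralFactorial_succ_zero (n : ℕ) : centralFactorial (n + 1) 0 = 0 := by
  simp [centralFactorial]

theorem centralFactorial_succ_succ (n k : ℕ) :
    centralFactorial (n + 1) (k + 1) =
      centralFactorial n k + ((k : ℚ) + 1) ^ 2 * centralFactorial n (k + 1) := by
  have hfact : ((2 * (k + 1)).factorial : ℚ) = (2 * k + 2) * (2 * k + 1) * (2 * k).factorial := by
    rw [show 2 * (k + 1) = 2 * k + 1 + 1 by ring, Nat.factorial_succ, Nat.factorial_succ]
    push_cast; ring
  have hsum : ∑ i ∈ range (2 * k + 3), (-1) ^ i * ((2 * k + 2).choose i : ℚ) *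
        ((k : ℚ) + 1 - i) ^ (2 * (n + 1)) =
      (2 * k + 2) * (2 * k + 1) *
          ∑ i ∈ range (2 * k + 1), (-1) ^ i * ((2 * k).choose i : ℚ) * ((k : ℚ) - i) ^ (2 * n) +
        ((k : ℚ) + 1) ^ 2 * ∑ i ∈ range (2 * k + 3),
          (-1) ^ i * ((2 * k + 2).choose i : ℚ) * ((k : ℚ) + 1 - i) ^ (2 * n) := by
    rw [← sum_range_choose_mul_sq_sub_sq k (fun x : ℚ => x ^ (2 * n)), mul_sum, ← sum_add_distrib]
    exact sum_congr rfl fun i _ => by ring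
  simp only [centralFactorial]
  push_cast
  rw [hfact, show 2 * (k + 1) = 2 * k + 2 by ring, hsum]
  field_simp

theorem stirling2Lev_two_eq_centralFactorial (n k : ℕ) :
    (stirling2Lev 2 n k : ℚ) = centralFactorial n k := by
  induction n, k using stirling2Lev.induct with
  | case1 => simp [stirling2Lev, centralFactorial_zero_zero]
  | case2 k => simp [stirling2Lev, centralFactorial_zero_succ]
  | case3 n => simp [stirling2Lev, centralFactorial_succ_zero]
  | case4 n k ih₁ ih₂ =>
    rw [stirling2Lev, centralFactorial_succ_succ, ← ih₁, ← ih₂]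
    push_cast; ring

/-- For `1 ≤ k ≤ n`, `S₂(n,k;2) = (2/(2k)!) Σ_{j=1}^k (−1)^{k−j} C(2k, k−j) j^{2n}` in `ℚ`. -/
theorem stmt_19 (n k : ℕ) (hk : 1 ≤ k) (hkn : k ≤ n) :
    (stirling2Lev 2 n k : ℚ) =
      (2 / (Nat.factorial (2 * k) : ℚ)) *
        ∑ j ∈ Finset.Icc 1 k,
          (-1 : ℚ) ^ (k - j) * (Nat.choose (2 * k) (k - j) : ℚ) * (j : ℚ) ^ (2 * n) := by
  have hn : 2 * n ≠ 0 := by omega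
  have hfold := sum_range_choose_mul_eq_two_mul_of_even (g := fun x : ℚ => x ^ (2 * n)) k
    (fun x => Even.neg_pow ⟨n, by ring⟩ x) (zero_pow hn)
  beta_reduce at hfold
  rw [stirling2Lev_two_eq_centralFactorial, centralFactorial, hfold]
  ring
end
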